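/- arXiv:2004.02750 — 8 statements merged into one kernel-verified Lean document; each statement's English description precedes it below -/
import Mathlib

section
/- For every m ≥ 3, the graph C_m □ C_m admits a Hamilton decomposition into two Hamiltonian cycles, i.e., there exist two Hamiltonian cycles of C_m □ C_m whose edge sets are disjoint and together cover every edge of C_m □ C_m. -/
open SimpleGraph

/-- The hypercube graph `Q_n` on vertex set `Fin n → Bool`:
two vertices are adjacent iff they differ in exactly one coordinate. -/
def hypercube (n : ℕ) : SimpleGraph (Fin n → Bool) where
  Adj u v := ∃ i, u i ≠ v i ∧ ∀ j, j ≠ i → u j = v j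
  symm := by
    constructor
    rintro u v ⟨i, hne, hrest⟩
    exact ⟨i, hne.symm, fun j hj => (hrest j hj).symm⟩
  loopless := by
    constructor
    rintro u ⟨i, hne, -⟩
    exact hne rfl

/-- The cycle graph `C_m` on `ZMod m`: `i` and `j` are adjacent iff
`i - j = 1` or `j - i = 1`. -/
def cycGraph (m : ℕ) : SimpleGraph (ZMod m) :=
  SimpleGraph.fromRel (fun i j => i - j = 1)

/-- The graph `C_m^{□k}` on `Fin k → ZMod m`: two vertices are adjacent iff they
differ in exactly one coordinate, and in that coordinate they differ by `±1`. -/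
def torusGraph (m k : ℕ) : SimpleGraph (Fin k → ZMod m) where
  Adj u v := ∃ i, (u i ≠ v i ∧ (u i - v i = 1 ∨ v i - u i = 1)) ∧ ∀ j, j ≠ i → u j = v j
  symm := by
    constructor
    rintro u v ⟨i, ⟨hne, hpm⟩, hrest⟩
    exact ⟨i, ⟨hne.symm, hpm.symm⟩, fun j hj => (hrest j hj).symm⟩
  loopless := by
    constructor
    rintro u ⟨i, ⟨hne, -⟩, -⟩
    exact hne rfl

private lemma torus_adj_comp (m k : ℕ) (σ : Equiv.Perm (Fin k)) {u v : Fin k → ZMod m}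
    (h : (torusGraph m k).Adj u v) : (torusGraph m k).Adj (u ∘ σ) (v ∘ σ) := by
  obtain ⟨i, ⟨hne, hpm⟩, hrest⟩ := h
  refine ⟨σ.symm i, ⟨?_, ?_⟩, ?_⟩
  · simpa using hne
  · simpa using hpm
  · intro j hj
    have : σ j ≠ i := fun hc => hj (by simp [← hc])
    simpa using hrest (σ j) this

/-- The automorphism of `C_m^{□k}` induced by a permutation `σ` of the axes,
sending a vertex `v : Fin k → ZMod m` to `v ∘ σ⁻¹`. -/
def permIso (m k : ℕ) (σ : Equiv.Perm (Fin k)) : torusGraph m k ≃g torusGraph m k where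
  toEquiv := Equiv.arrowCongr σ (Equiv.refl (ZMod m))
  map_rel_iff' := by
    intro u v
    constructor
    · intro h
      have h2 := torus_adj_comp m k σ h
      have hu : (Equiv.arrowCongr σ (Equiv.refl (ZMod m)) u) ∘ σ = u := by
        funext x; simp
      have hv : (Equiv.arrowCongr σ (Equiv.refl (ZMod m)) v) ∘ σ = v := by
        funext x; simp
      rwa [hu, hv] at h2
    · intro h
      have h2 := torus_adj_comp m k σ.symm h
      have hu : u ∘ ⇑σ.symm = Equiv.arrowCongr σ (Equiv.refl (ZMod m)) u := by
        funext x; simp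
      have hv : v ∘ ⇑σ.symm = Equiv.arrowCongr σ (Equiv.refl (ZMod m)) v := by
        funext x; simp
      rwa [hu, hv] at h2

/-- A Hamilton decomposition of a simple graph `G`: a family of Hamiltonian cycles
whose edge sets are pairwise disjoint and together cover every edge of `G`. -/
def IsHamDecomp {V : Type*} [DecidableEq V] (G : SimpleGraph V) {ι : Type*}
    (C : ι → Σ v, G.Walk v v) : Prop :=
  (∀ i, (C i).2.IsHamiltonianCycle) ∧
  (∀ i j, i ≠ j → ∀ e, e ∈ (C i).2.edges → e ∉ (C j).2.edges) ∧
  (∀ e ∈ G.edgeSet, ∃ i, e ∈ (C i).2.edges)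

/-!
Off the antidiagonal `x + y = -1` of the torus `ℤ/m × ℤ/m`, the first cycle leaves a vertex to
the right and the second one upwards; on the antidiagonal they swap roles. Following the first
rule from `(0, 0)` traces a staircase that visits `(r - q, q)` at time `q * m + r`, so it passes
through every vertex once and closes up after `m²` steps; the second cycle is its mirror image
under `(x, y) ↦ (y, x)`. At every vertex the two cycles leave along the two different forward
edges, so together they cover all edges. An edge used forwards by one cycle and backwards by the
other would make two unit steps sum to zero, which is impossible once `2 ≠ 0` in `ℤ/m`.
-/

open Function

theorem Function.minimalPeriod_eq_card_of_surjective {α : Type*} [Fintype α] {f : α → α} {x : α}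
    (hx : x ∈ periodicPts f) (hsurj : Surjective (f^[·] x)) :
    minimalPeriod f x = Fintype.card α := by
  have hpos := minimalPeriod_pos_of_mem_periodicPts hx
  let e : Fin (minimalPeriod f x) → α := fun t => f^[t] x
  have he : Bijective e := by
    refine ⟨fun s t h => Fin.ext (iterate_injOn_Iio_minimalPeriod s.2 t.2 h), fun y => ?_⟩
    obtain ⟨n, rfl⟩ := hsurj y
    exact ⟨⟨n % minimalPeriod f x, Nat.mod_lt _ hpos⟩, iterate_mod_minimalPeriod_eq⟩
  simpa using Fintype.card_congr (Equiv.ofBijective e he)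

theorem Function.apply_iterate_eq_self_of_minimalPeriod_eq_succ {α : Type*} {f : α → α} {x : α}
    {n : ℕ} (hn : minimalPeriod f x = n + 1) : f (f^[n] x) = x := by
  rw [← iterate_succ_apply' f n x, Nat.succ_eq_add_one, ← hn, iterate_minimalPeriod]

namespace SimpleGraph

variable {V : Type*} {G : SimpleGraph V}

theorem Walk.IsHamiltonian.isHamiltonianCycle_cons [DecidableEq V] {u v : V} {p : G.Walk v u}
    (hp : p.IsHamiltonian) (h : G.Adj u v) (he : s(u, v) ∉ p.edges) :
    (Walk.cons h p).IsHamiltonianCycle := by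
  rw [Walk.isHamiltonianCycle_iff_isCycle_and_support_count_tail_eq_one, Walk.cons_isCycle_iff]
  exact ⟨⟨hp.isPath, he⟩, fun w => by simpa using hp w⟩

variable {σ : V → V}

def orbitWalk (hσ : ∀ v, G.Adj v (σ v)) : (v : V) → (n : ℕ) → G.Walk v (σ^[n] v)
  | _, 0 => Walk.nil
  | v, n + 1 => Walk.cons (hσ v) (orbitWalk hσ (σ v) n)

theorem support_orbitWalk (hσ : ∀ v, G.Adj v (σ v)) (v : V) (n : ℕ) :
    (orbitWalk hσ v n).support = (List.range (n + 1)).map (σ^[·] v) := by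
  induction n generalizing v with
  | zero => rfl
  | succ n ih =>
    change v :: (orbitWalk hσ (σ v) n).support = _
    rw [ih, List.range_succ_eq_map (n := n + 1), List.map_cons, List.map_map]
    rfl

theorem edges_orbitWalk (hσ : ∀ v, G.Adj v (σ v)) (v : V) (n : ℕ) :
    (orbitWalk hσ v n).edges = (List.range n).map fun t => s(σ^[t] v, σ^[t + 1] v) := by
  induction n generalizing v with
  | zero => rfl
  | succ n ih =>
    change s(v, σ v) :: (orbitWalk hσ (σ v) n).edges = _
    rw [ih, List.range_succ_eq_map, List.map_cons, List.map_map]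
    rfl

theorem isHamiltonianCycle_cons_orbitWalk [DecidableEq V] (hσ : ∀ v, G.Adj v (σ v)) {v : V}
    {n : ℕ} (hn : minimalPeriod σ v = n + 1) (hn2 : 2 ≤ n) (hsurj : Surjective (σ^[·] v))
    (h : G.Adj (σ^[n] v) v) : (Walk.cons h (orbitWalk hσ v n)).IsHamiltonianCycle := by
  have hinj {s t : ℕ} (hs : s ≤ n) (ht : t ≤ n) (heq : σ^[s] v = σ^[t] v) : s = t :=
    iterate_injOn_Iio_minimalPeriod (by omega : s < _) (by omega : t < _) heq
  have hpath : (orbitWalk hσ v n).IsPath := by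
    rw [Walk.isPath_def, support_orbitWalk]
    exact List.Nodup.map_on (fun s hs t ht => hinj (by simp_all) (by simp_all)) List.nodup_range
  have hmem (w : V) : w ∈ (orbitWalk hσ v n).support := by
    obtain ⟨k, rfl⟩ := hsurj w
    rw [support_orbitWalk, List.mem_map]
    exact ⟨k % minimalPeriod σ v, List.mem_range.2 (hn ▸ Nat.mod_lt _ (by omega)),
      iterate_mod_minimalPeriod_eq⟩
  have hclosing : s(σ^[n] v, v) ∉ (orbitWalk hσ v n).edges := by
    rw [edges_orbitWalk, List.mem_map]
    rintro ⟨t, ht, he⟩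
    rw [List.mem_range] at ht
    rcases Sym2.eq_iff.1 he with ⟨h₁, -⟩ | ⟨h₁, h₂⟩
    · exact ht.ne (hinj ht.le le_rfl h₁)
    · obtain rfl : t = 0 := hinj ht.le (Nat.zero_le n) h₁
      have := hinj ht le_rfl h₂
      omega
  exact (hpath.isHamiltonian_of_mem hmem).isHamiltonianCycle_cons h hclosing

theorem mem_edges_cons_orbitWalk (hσ : ∀ v, G.Adj v (σ v)) {v : V} {n : ℕ}
    (hn : minimalPeriod σ v = n + 1) (hsurj : Surjective (σ^[·] v)) (h : G.Adj (σ^[n] v) v)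
    {e : Sym2 V} : e ∈ (Walk.cons h (orbitWalk hσ v n)).edges ↔ ∃ w, e = s(w, σ w) := by
  have hclose := apply_iterate_eq_self_of_minimalPeriod_eq_succ hn
  rw [Walk.edges_cons, List.mem_cons, edges_orbitWalk, List.mem_map]
  constructor
  · rintro (rfl | ⟨t, -, rfl⟩)
    · exact ⟨σ^[n] v, by rw [hclose]⟩
    · exact ⟨σ^[t] v, by rw [iterate_succ_apply']⟩
  · rintro ⟨w, rfl⟩
    obtain ⟨k, rfl⟩ := hsurj w
    have hk : k % minimalPeriod σ v < n + 1 := hn ▸ Nat.mod_lt _ (by omega)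
    simp only [← iterate_mod_minimalPeriod_eq (n := k)]
    rcases Nat.lt_succ_iff_lt_or_eq.1 hk with hk | hk
    · exact Or.inr ⟨_, List.mem_range.2 hk, by rw [iterate_succ_apply']⟩
    · exact Or.inl (by rw [hk, hclose])

theorem exists_isHamiltonianCycle_mem_edges_iff [DecidableEq V] (hσ : ∀ v, G.Adj v (σ v)) {v : V}
    (h3 : 3 ≤ minimalPeriod σ v) (hsurj : Surjective (σ^[·] v)) :
    ∃ (u : V) (p : G.Walk u u), p.IsHamiltonianCycle ∧ ∀ e, e ∈ p.edges ↔ ∃ w, e = s(w, σ w) := by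
  obtain ⟨n, hn⟩ : ∃ n, minimalPeriod σ v = n + 1 := ⟨_, (Nat.succ_pred_eq_of_pos (by omega)).symm⟩
  have h : G.Adj (σ^[n] v) v := by
    simpa only [apply_iterate_eq_self_of_minimalPeriod_eq_succ hn] using hσ (σ^[n] v)
  exact ⟨_, _, isHamiltonianCycle_cons_orbitWalk hσ hn (by omega) hsurj h,
    fun e => mem_edges_cons_orbitWalk hσ hn hsurj h⟩

end SimpleGraph

theorem isHamDecomp_pair {V : Type*} [DecidableEq V] {G : SimpleGraph V} {u v : V}
    {p : G.Walk u u} {q : G.Walk v v} (hp : p.IsHamiltonianCycle) (hq : q.IsHamiltonianCycle)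
    (hdisj : ∀ e ∈ p.edges, e ∉ q.edges) (hcover : ∀ e ∈ G.edgeSet, e ∈ p.edges ∨ e ∈ q.edges) :
    IsHamDecomp G ![⟨u, p⟩, ⟨v, q⟩] := by
  refine ⟨Fin.forall_fin_two.2 ⟨hp, hq⟩, ?_, fun e he => ?_⟩
  · intro i j hij e hi hj
    fin_cases i <;> fin_cases j
    exacts [hij rfl, hdisj e hi hj, hdisj e hj hi, hij rfl]
  · rcases hcover e he with h | h
    exacts [⟨0, h⟩, ⟨1, h⟩]

section Torus

variable {m : ℕ}

theorem cycGraph_adj_iff {a b : ZMod m} :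
    (cycGraph m).Adj a b ↔ a ≠ b ∧ (a = b + 1 ∨ b = a + 1) := by
  simp only [cycGraph, SimpleGraph.fromRel_adj, sub_eq_iff_eq_add']

theorem cycGraph_adj_add_one (hm : m ≠ 1) (a : ZMod m) : (cycGraph m).Adj a (a + 1) := by
  have : Nontrivial (ZMod m) := ZMod.nontrivial_iff.2 hm
  exact cycGraph_adj_iff.2 ⟨(succ_ne_self a).symm, Or.inr rfl⟩

theorem exists_eq_of_mem_edgeSet_boxProd {e : Sym2 (ZMod m × ZMod m)}
    (he : e ∈ (cycGraph m □ cycGraph m).edgeSet) :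
    ∃ v, e = s(v, v + (1, 0)) ∨ e = s(v, v + (0, 1)) := by
  induction e using Sym2.ind with
  | _ x y =>
  obtain ⟨x₁, x₂⟩ := x
  obtain ⟨y₁, y₂⟩ := y
  rcases he with ⟨hadj, rfl : x₂ = y₂⟩ | ⟨hadj, rfl : x₁ = y₁⟩
  · rcases (cycGraph_adj_iff (a := x₁) (b := y₁) |>.1 hadj).2 with rfl | rfl
    · exact ⟨(y₁, x₂), .inl (by simp [Sym2.eq_swap])⟩
    · exact ⟨(x₁, x₂), .inl (by simp)⟩
  · rcases (cycGraph_adj_iff (a := x₂) (b := y₂) |>.1 hadj).2 with rfl | rfl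
    · exact ⟨(x₁, y₂), .inr (by simp [Sym2.eq_swap])⟩
    · exact ⟨(x₁, x₂), .inr (by simp)⟩

def rightStep (m : ℕ) (v : ZMod m × ZMod m) : ZMod m × ZMod m :=
  if v.1 + v.2 = -1 then v + (0, 1) else v + (1, 0)

def upStep (m : ℕ) (v : ZMod m × ZMod m) : ZMod m × ZMod m :=
  if v.1 + v.2 = -1 then v + (1, 0) else v + (0, 1)

theorem swap_rightStep_swap (v : ZMod m × ZMod m) : (rightStep m v.swap).swap = upStep m v := by
  unfold rightStep upStep
  rw [Prod.fst_swap, Prod.snd_swap, add_comm v.2]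
  split_ifs <;> rfl

theorem rightStep_upStep_eq_or (v : ZMod m × ZMod m) :
    rightStep m v = v + (1, 0) ∧ upStep m v = v + (0, 1) ∨
      rightStep m v = v + (0, 1) ∧ upStep m v = v + (1, 0) := by
  unfold rightStep upStep
  split_ifs <;> simp

theorem adj_rightStep (hm : m ≠ 1) (v : ZMod m × ZMod m) :
    (cycGraph m □ cycGraph m).Adj v (rightStep m v) := by
  rw [SimpleGraph.boxProd_adj]
  rcases rightStep_upStep_eq_or v with ⟨h, -⟩ | ⟨h, -⟩ <;> rw [h]
  · exact .inl ⟨cycGraph_adj_add_one hm _, by simp⟩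
  · exact .inr ⟨cycGraph_adj_add_one hm _, by simp⟩

theorem upStep_rightStep_ne (h2 : (2 : ZMod m) ≠ 0) (v : ZMod m × ZMod m) :
    upStep m (rightStep m v) ≠ v := by
  have h1 : (1 : ZMod m) ≠ 0 := fun h => h2 (by rw [← one_add_one_eq_two, h, add_zero])
  rcases rightStep_upStep_eq_or v with ⟨hr, -⟩ | ⟨hr, -⟩ <;> rw [hr] <;>
    rcases rightStep_upStep_eq_or (v + _) with ⟨-, hu⟩ | ⟨-, hu⟩ <;> rw [hu] <;>
    simp [add_assoc, Prod.ext_iff, h1, h2, one_add_one_eq_two]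

theorem sym2_rightStep_ne_upStep (h2 : (2 : ZMod m) ≠ 0) (v w : ZMod m × ZMod m) :
    s(v, rightStep m v) ≠ s(w, upStep m w) := by
  have h1 : (1 : ZMod m) ≠ 0 := fun h => h2 (by rw [← one_add_one_eq_two, h, add_zero])
  intro h
  rcases Sym2.eq_iff.1 h with ⟨rfl, h⟩ | ⟨hv, hw⟩
  · rcases rightStep_upStep_eq_or v with ⟨hr, hu⟩ | ⟨hr, hu⟩ <;>
      simp [hr, hu, Prod.ext_iff, h1, h1.symm] at h
  · exact upStep_rightStep_ne h2 v (by rw [hw, hv])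

def stair (m t : ℕ) : ZMod m × ZMod m := ((t : ZMod m) - (t / m : ℕ), (t / m : ℕ))

theorem stair_succ (t : ℕ) : stair m (t + 1) = rightStep m (stair m t) := by
  have key : (t : ZMod m) = -1 ↔ m ∣ t + 1 := by
    rw [eq_neg_iff_add_eq_zero, ← ZMod.natCast_eq_zero_iff (t + 1) m, Nat.cast_succ]
  simp only [stair, rightStep, Nat.succ_div, sub_add_cancel, key]
  split_ifs <;> ext <;> simp
  ring

theorem iterate_rightStep_zero (t : ℕ) : (rightStep m)^[t] 0 = stair m t := by
  induction t with
  | zero => ext <;> simp [stair]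
  | succ t ih => rw [iterate_succ_apply', ih, stair_succ]

theorem stair_mul_self [NeZero m] : stair m (m * m) = 0 := by
  simp [stair, Nat.mul_div_cancel_left m (NeZero.pos m)]

theorem surjective_stair [NeZero m] : Surjective (stair m) := by
  intro v
  refine ⟨m * v.2.val + (v.1 + v.2).val, ?_⟩
  have hdiv : (m * v.2.val + (v.1 + v.2).val) / m = v.2.val := by
    rw [Nat.mul_add_div (NeZero.pos m), Nat.div_eq_of_lt (ZMod.val_lt _), add_zero]
  ext <;> simp [stair, hdiv]

theorem surjective_iterate_rightStep [NeZero m] : Surjective ((rightStep m)^[·] 0) := by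
  simpa only [iterate_rightStep_zero] using surjective_stair

theorem minimalPeriod_rightStep [NeZero m] : minimalPeriod (rightStep m) 0 = m * m := by
  have hper : IsPeriodicPt (rightStep m) (m * m) 0 := by
    rw [IsPeriodicPt, IsFixedPt, iterate_rightStep_zero, stair_mul_self]
  have hpos : 0 < m * m := Nat.mul_pos (NeZero.pos m) (NeZero.pos m)
  rw [minimalPeriod_eq_card_of_surjective (mk_mem_periodicPts hpos hper)
    surjective_iterate_rightStep, Fintype.card_prod, ZMod.card]

theorem exists_rightStep_or_upStep_of_mem_edgeSet {e : Sym2 (ZMod m × ZMod m)}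
    (he : e ∈ (cycGraph m □ cycGraph m).edgeSet) :
    (∃ w, e = s(w, rightStep m w)) ∨ ∃ w, e = s(w, upStep m w) := by
  obtain ⟨v, rfl | rfl⟩ := exists_eq_of_mem_edgeSet_boxProd he <;>
    rcases rightStep_upStep_eq_or v with ⟨hr, hu⟩ | ⟨hr, hu⟩
  exacts [.inl ⟨v, by rw [hr]⟩, .inr ⟨v, by rw [hu]⟩, .inr ⟨v, by rw [hu]⟩, .inl ⟨v, by rw [hr]⟩]

theorem exists_isHamiltonianCycle_rightStep (hm : 2 ≤ m) :
    ∃ (u : ZMod m × ZMod m) (p : (cycGraph m □ cycGraph m).Walk u u),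
      p.IsHamiltonianCycle ∧ ∀ e, e ∈ p.edges ↔ ∃ w, e = s(w, rightStep m w) := by
  have : NeZero m := ⟨by omega⟩
  refine exists_isHamiltonianCycle_mem_edges_iff (adj_rightStep (by omega)) (v := 0) ?_
    surjective_iterate_rightStep
  rw [minimalPeriod_rightStep]
  nlinarith

theorem exists_isHamiltonianCycle_upStep (hm : 2 ≤ m) :
    ∃ (u : ZMod m × ZMod m) (p : (cycGraph m □ cycGraph m).Walk u u),
      p.IsHamiltonianCycle ∧ ∀ e, e ∈ p.edges ↔ ∃ w, e = s(w, upStep m w) := by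
  obtain ⟨u, p, hp, hpe⟩ := exists_isHamiltonianCycle_rightStep hm
  let swap := boxProdComm (cycGraph m) (cycGraph m)
  refine ⟨_, p.map swap.toHom, hp.map swap.bijective, fun e => ?_⟩
  rw [Walk.edges_map, List.mem_map]
  constructor
  · rintro ⟨e, he, rfl⟩
    obtain ⟨w, rfl⟩ := (hpe e).1 he
    exact ⟨w.swap, by simp [swap, ← swap_rightStep_swap]⟩
  · rintro ⟨w, rfl⟩
    exact ⟨_, (hpe _).2 ⟨w.swap, rfl⟩, by simp [swap, ← swap_rightStep_swap]⟩

end Torus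

/-- For every `m ≥ 3`, the graph `C_m □ C_m` admits a Hamilton decomposition into
two Hamiltonian cycles. -/
theorem cycle_boxProd_hamDecomp (m : ℕ) (hm : 3 ≤ m) :
    ∃ C : Fin 2 → Σ v, (cycGraph m □ cycGraph m).Walk v v,
      IsHamDecomp (cycGraph m □ cycGraph m) C := by
  have h2 : (2 : ZMod m) ≠ 0 := by
    rw [← Nat.cast_ofNat, Ne, ZMod.natCast_eq_zero_iff]
    exact fun h => absurd (Nat.le_of_dvd two_pos h) (by omega)
  obtain ⟨u, p, hp, hpe⟩ := exists_isHamiltonianCycle_rightStep (by omega : 2 ≤ m)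
  obtain ⟨v, q, hq, hqe⟩ := exists_isHamiltonianCycle_upStep (by omega : 2 ≤ m)
  refine ⟨_, isHamDecomp_pair hp hq (fun e he he' => ?_) fun e he => ?_⟩
  · obtain ⟨w, rfl⟩ := (hpe e).1 he
    obtain ⟨w', hw'⟩ := (hqe _).1 he'
    exact sym2_rightStep_ne_upStep h2 w w' hw'
  · rw [hpe, hqe]
    exact exists_rightStep_or_upStep_of_mem_edgeSet he
end

section
/- Let G be a simple graph with exactly N vertices, N ≥ 3. If E_1 and E_2 are edge-disjoint Hamiltonian cycles of G, and H_1 and H_2 are edge-disjoint Hamiltonian cycles of C_N □ C_N, then the four Hamiltonian cycles f(E_1,H_1), f(E_1,H_2), f(E_2,H_1), f(E_2,H_2) of G □ G are pairwise edge-disjoint. -/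
open SimpleGraph

/-- If `E₁, E₂` are edge-disjoint Hamiltonian cycles of a graph `G` with `N ≥ 3`
vertices, and `H₁, H₂` are edge-disjoint Hamiltonian cycles of `C_N □ C_N`, then the
four Hamiltonian cycles `f(Eᵢ, Hⱼ)` of `G □ G` are pairwise edge-disjoint.  Here
`f(Eᵢ, Hⱼ)` is the image of `Hⱼ` under the homomorphism `ψᵢ : (a,b) ↦ (φᵢ a, φᵢ b)`,
where `φᵢ` is the bijection enumerating the vertices of `G` along `Eᵢ`. -/
theorem f_pairwise_edge_disjoint {V : Type*} [Fintype V] [DecidableEq V]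
    (G : SimpleGraph V) (N : ℕ) (hN : 3 ≤ N) (hcard : Fintype.card V = N)
    (E : Fin 2 → Σ v, G.Walk v v) (hE : ∀ i, (E i).2.IsHamiltonianCycle)
    (hEdisj : ∀ e, e ∈ (E 0).2.edges → e ∉ (E 1).2.edges)
    (φ : Fin 2 → ZMod N → V) (hbij : ∀ i, Function.Bijective (φ i))
    (hφE : ∀ i (a : ZMod N), s(φ i a, φ i (a + 1)) ∈ (E i).2.edges)
    (H : Fin 2 → Σ p, (cycGraph N □ cycGraph N).Walk p p)
    (hH : ∀ j, (H j).2.IsHamiltonianCycle)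
    (hHdisj : ∀ e, e ∈ (H 0).2.edges → e ∉ (H 1).2.edges)
    (ψ : Fin 2 → ((cycGraph N □ cycGraph N) →g (G □ G)))
    (hψ : ∀ i (p : ZMod N × ZMod N), ψ i p = (φ i p.1, φ i p.2)) :
    ∀ i j i' j' : Fin 2, (i, j) ≠ (i', j') →
      ∀ e, e ∈ ((H j).2.map (ψ i)).edges → e ∉ ((H j').2.map (ψ i')).edges := by
  -- adjacency in the cycle yields an edge of `E i` under `φ i`
  have cycEdge : ∀ (i : Fin 2) (a a' : ZMod N), (cycGraph N).Adj a a' →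
      s(φ i a, φ i a') ∈ (E i).2.edges := by
    intro i a a' hadj
    obtain ⟨-, h | h⟩ := hadj
    · have : a = a' + 1 := by rw [sub_eq_iff_eq_add] at h; rw [h, add_comm]
      rw [this, Sym2.eq_swap]
      exact hφE i a'
    · have : a' = a + 1 := by rw [sub_eq_iff_eq_add] at h; rw [h, add_comm]
      rw [this]
      exact hφE i a
  -- decomposition of an edge of the mapped walk
  have keyP : ∀ (i j : Fin 2) (x y : V × V), s(x, y) ∈ ((H j).2.map (ψ i)).edges →
      (x.1 = y.1 ∧ s(x.2, y.2) ∈ (E i).2.edges) ∨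
      (x.2 = y.2 ∧ s(x.1, y.1) ∈ (E i).2.edges) := by
    intro i j x y hmem
    rw [SimpleGraph.Walk.edges_map, List.mem_map] at hmem
    obtain ⟨e1, he1, heq⟩ := hmem
    induction e1 with
    | h p q =>
      have hadj : (cycGraph N □ cycGraph N).Adj p q := (H j).2.adj_of_mem_edges he1
      rw [SimpleGraph.boxProd_adj] at hadj
      have hp := hψ i p
      have hq := hψ i q
      have key : ((ψ i p).1 = (ψ i q).1 ∧ s((ψ i p).2, (ψ i q).2) ∈ (E i).2.edges) ∨
          ((ψ i p).2 = (ψ i q).2 ∧ s((ψ i p).1, (ψ i q).1) ∈ (E i).2.edges) := by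
        rcases hadj with ⟨h1, h2⟩ | ⟨h1, h2⟩
        · right
          constructor
          · rw [hp, hq]; exact congrArg (φ i) h2
          · rw [hp, hq]; exact cycEdge i p.1 q.1 h1
        · left
          constructor
          · rw [hp, hq]; exact congrArg (φ i) h2
          · rw [hp, hq]; exact cycEdge i p.2 q.2 h1
      rw [Sym2.map_pair_eq, Sym2.eq_iff] at heq
      rcases heq with ⟨hx, hy⟩ | ⟨hx, hy⟩
      · rw [← hx, ← hy]; exact key
      · rw [← hx, ← hy]
        rcases key with ⟨h1, h2⟩ | ⟨h1, h2⟩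
        · exact Or.inl ⟨h1.symm, Sym2.eq_swap ▸ h2⟩
        · exact Or.inr ⟨h1.symm, Sym2.eq_swap ▸ h2⟩
  intro i j i' j' hne e he he'
  by_cases hii : i = i'
  · -- same `i`: use injectivity of `ψ i` and edge-disjointness of the `H`s
    subst hii
    have hjj : j ≠ j' := fun h => hne (by rw [h])
    have hinj : Function.Injective (ψ i) := by
      intro p q h
      rw [hψ i p, hψ i q, Prod.ext_iff] at h
      exact Prod.ext ((hbij i).1 h.1) ((hbij i).1 h.2)
    rw [SimpleGraph.Walk.edges_map, List.mem_map] at he he'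
    obtain ⟨e1, he1, hq1⟩ := he
    obtain ⟨e2, he2, hq2⟩ := he'
    have he12 : e1 = e2 := Sym2.map.injective hinj (hq1.trans hq2.symm)
    subst he12
    have twoCases : ∀ k : Fin 2, k = 0 ∨ k = 1 := by decide
    rcases twoCases j with rfl | rfl <;> rcases twoCases j' with rfl | rfl
    · exact absurd rfl hjj
    · exact hHdisj e1 he1 he2
    · exact hHdisj e1 he2 he1
    · exact absurd rfl hjj
  · -- different `i`: use edge-disjointness of the `E`s
    induction e with
    | h x y =>
      have hxy : x ≠ y := by
        have : (G □ G).Adj x y := ((H j).2.map (ψ i)).adj_of_mem_edges he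
        exact this.ne
      have h1 := keyP i j x y he
      have h2 := keyP i' j' x y he'
      rcases h1 with ⟨ha, hb⟩ | ⟨ha, hb⟩ <;> rcases h2 with ⟨hc, hd⟩ | ⟨hc, hd⟩
      · have twoCases : ∀ k : Fin 2, k = 0 ∨ k = 1 := by decide
        rcases twoCases i with rfl | rfl <;> rcases twoCases i' with rfl | rfl
        · exact absurd rfl hii
        · exact hEdisj _ hb hd
        · exact hEdisj _ hd hb
        · exact absurd rfl hii
      · exact hxy (Prod.ext ha hc)
      · exact hxy (Prod.ext hc ha)
      · have twoCases : ∀ k : Fin 2, k = 0 ∨ k = 1 := by decide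
        rcases twoCases i with rfl | rfl <;> rcases twoCases i' with rfl | rfl
        · exact absurd rfl hii
        · exact hEdisj _ hb hd
        · exact hEdisj _ hd hb
        · exact absurd rfl hii
end

section
/- Let G be a simple graph with exactly N vertices, N ≥ 3. If {H_1, H_2} is a Hamilton decomposition of C_N □ C_N and {E_1, …, E_k} is a Hamilton decomposition of G into k Hamiltonian cycles, then {f(E_i, H_j) : 1 ≤ i ≤ k, 1 ≤ j ≤ 2} is a Hamilton decomposition of G □ G into 2k Hamiltonian cycles. In particular, if the hypercube Q_{2n} has a Hamilton decomposition into n Hamiltonian cycles, then Q_{4n} ≅ Q_{2n} □ Q_{2n} has a Hamilton decomposition into 2n Hamiltonian cycles. -/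
open SimpleGraph

namespace HamAux

variable {V : Type*}

lemma edge_getVert_mem {G : SimpleGraph V} :
    ∀ {u v : V} (p : G.Walk u v) {t : ℕ}, t < p.length →
      s(p.getVert t, p.getVert (t+1)) ∈ p.edges := by
  intro u v p
  induction p with
  | nil => intro t ht; simp at ht
  | cons h q ih =>
    intro t ht
    cases t with
    | zero => simp [Walk.getVert_zero]
    | succ t =>
      simp only [Walk.getVert_cons_succ, Walk.edges_cons, List.mem_cons]
      exact Or.inr (ih (by simpa using ht))

lemma support_eq_map_getVert {G : SimpleGraph V} :
    ∀ {u v : V} (p : G.Walk u v), p.support = (List.range (p.length + 1)).map p.getVert := by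
  intro u v p
  induction p with
  | nil => simp [List.range_succ]
  | cons h q ih =>
    rw [Walk.support_cons, Walk.length_cons, List.range_succ_eq_map]
    simp only [List.map_cons, Walk.getVert_zero, List.map_map]
    rw [ih]
    rfl


def chainWalk (G : SimpleGraph V) {M : ℕ} (g : ZMod M → V)
    (hadj : ∀ a, G.Adj (g a) (g (a+1))) : (k : ℕ) → G.Walk (g 0) (g (k : ZMod M))
  | 0 => Walk.nil.copy rfl (by rw [Nat.cast_zero])
  | (k+1) => ((chainWalk G g hadj k).concat
      (by have := hadj (k : ZMod M); rwa [← Nat.cast_add_one] at this))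

lemma chainWalk_support (G : SimpleGraph V) {M : ℕ} (g : ZMod M → V)
    (hadj : ∀ a, G.Adj (g a) (g (a+1))) (k : ℕ) :
    (chainWalk G g hadj k).support = (List.range (k+1)).map (fun t : ℕ => g t) := by
  induction k with
  | zero => simp [chainWalk, List.range_succ]
  | succ k ih => simp [chainWalk, Walk.support_concat, ih, List.range_succ]

lemma chainWalk_edges (G : SimpleGraph V) {M : ℕ} (g : ZMod M → V)
    (hadj : ∀ a, G.Adj (g a) (g (a+1))) (k : ℕ) :
    (chainWalk G g hadj k).edges
      = (List.range k).map (fun t : ℕ => s(g t, g ((t : ZMod M) + 1))) := by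
  induction k with
  | zero => simp [chainWalk]
  | succ k ih =>
    show ((chainWalk G g hadj k).concat _).edges = _
    rw [Walk.edges_concat, ih, List.range_succ, List.map_append]
    simp [Nat.cast_add_one]

lemma chainWalk_length (G : SimpleGraph V) {M : ℕ} (g : ZMod M → V)
    (hadj : ∀ a, G.Adj (g a) (g (a+1))) (k : ℕ) :
    (chainWalk G g hadj k).length = k := by
  induction k with
  | zero => simp [chainWalk]
  | succ k ih => simp [chainWalk, ih]


section Enum
variable [Fintype V] [DecidableEq V] {G : SimpleGraph V} {M : ℕ}

lemma natInjZMod (hM : 3 ≤ M) {t u : ℕ} (ht : t < M) (hu : u < M)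
    (h : (t : ZMod M) = u) : t = u := by
  have h1 := ZMod.val_cast_of_lt ht
  have h2 := ZMod.val_cast_of_lt hu
  rw [h] at h1; omega

lemma two_ne_zero' (hM : 3 ≤ M) : (2 : ZMod M) ≠ 0 := by
  intro h
  have : ((2 : ℕ) : ZMod M) = ((0 : ℕ) : ZMod M) := by push_cast; exact h
  have := natInjZMod hM (by omega) (by omega) this
  omega

lemma stepInj (hM : 3 ≤ M) {g : ZMod M → V} (hinj : Function.Injective g) :
    Function.Injective (fun a : ZMod M => s(g a, g (a+1))) := by
  intro a b h
  simp only [Sym2.eq, Sym2.rel_iff', Prod.mk.injEq, Prod.swap_prod_mk] at h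
  rcases h with ⟨h1, h2⟩ | ⟨h1, h2⟩
  · exact hinj h1
  · exfalso
    have hb : b = a + 1 := hinj h2.symm
    have ha : a = b + 1 := hinj h1
    rw [hb] at ha
    have : (2 : ZMod M) = 0 := by linear_combination -ha
    exact two_ne_zero' hM this

lemma exists_hamCycle_of_enum (G : SimpleGraph V) (hM : 3 ≤ M)
    (hcard : Fintype.card V = M) (g : ZMod M → V)
    (hbij : Function.Bijective g) (hadj : ∀ a, G.Adj (g a) (g (a+1))) :
    ∃ w : G.Walk (g 0) (g 0), w.IsHamiltonianCycle ∧
      ∀ e, e ∈ w.edges ↔ ∃ a : ZMod M, e = s(g a, g (a+1)) := by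
  haveI : NeZero M := ⟨by omega⟩
  set w := (chainWalk G g hadj M).copy rfl (by rw [ZMod.natCast_self]) with hw
  have hedges : w.edges = (List.range M).map (fun t : ℕ => s(g t, g ((t : ZMod M)+1))) := by
    rw [hw, Walk.edges_copy, chainWalk_edges]
  have hsupp : w.support = (List.range (M+1)).map (fun t : ℕ => g t) := by
    rw [hw, Walk.support_copy, chainWalk_support]
  have hlen : w.length = M := by rw [hw, Walk.length_copy, chainWalk_length]
  have htail : w.support.tail = (List.range M).map (fun t : ℕ => g ((t+1 : ℕ))) := by
    rw [hsupp, List.range_succ_eq_map]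
    simp [List.map_map, Function.comp_def]
  have htail_nodup : w.support.tail.Nodup := by
    rw [htail]
    refine List.Nodup.map_on ?_ (List.nodup_range (n := M))
    intro t ht u hu h
    simp only [List.mem_range] at ht hu
    have h1 : ((t+1:ℕ) : ZMod M) = ((u+1:ℕ) : ZMod M) := hbij.1 h
    push_cast at h1
    exact natInjZMod hM ht hu (add_right_cancel h1)
  have hnn : ¬ w.Nil := by
    rw [Walk.nil_iff_length_eq, hlen]; omega
  have hne : w ≠ Walk.nil := by
    intro h; rw [h] at hlen; simp at hlen; omega
  have hedge_nodup : w.edges.Nodup := by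
    rw [hedges]
    refine List.Nodup.map_on ?_ (List.nodup_range (n := M))
    intro t ht u hu h
    simp only [List.mem_range] at ht hu
    exact natInjZMod hM ht hu (stepInj hM hbij.1 h)
  have hham : ∀ x, w.support.tail.count x = 1 := by
    intro x
    refine List.count_eq_one_of_mem htail_nodup ?_
    rw [htail]
    obtain ⟨c, rfl⟩ := hbij.2 x
    refine List.mem_map.2 ⟨(c-1).val, List.mem_range.2 (ZMod.val_lt _), ?_⟩
    congr 1
    push_cast
    rw [ZMod.natCast_rightInverse (c - 1)]
    ring
  refine ⟨w, ⟨⟨⟨⟨hedge_nodup⟩, hne⟩, htail_nodup⟩, ?_⟩, ?_⟩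
  · intro x
    rw [Walk.support_tail_of_not_nil _ hnn]
    exact hham x
  · intro e
    rw [hedges, List.mem_map]
    constructor
    · rintro ⟨t, ht, rfl⟩; exact ⟨t, rfl⟩
    · rintro ⟨a, rfl⟩
      refine ⟨a.val, List.mem_range.2 (ZMod.val_lt a), ?_⟩
      rw [ZMod.natCast_rightInverse a]


lemma edges_eq_of_enum (hM : 3 ≤ M) (hcard : Fintype.card V = M)
    {v : V} {w : G.Walk v v} (hw : w.IsHamiltonianCycle)
    (g : ZMod M → V) (hinj : Function.Injective g)
    (hmem : ∀ a : ZMod M, s(g a, g (a+1)) ∈ w.edges) :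
    ∀ e, e ∈ w.edges ↔ ∃ a : ZMod M, e = s(g a, g (a+1)) := by
  haveI : NeZero M := ⟨by omega⟩
  set S : Finset (Sym2 V) := Finset.image (fun a : ZMod M => s(g a, g (a+1))) Finset.univ with hS
  have hcardS : S.card = M := by
    rw [hS, Finset.card_image_of_injective _ (stepInj hM hinj), Finset.card_univ, ZMod.card]
  have hsub : S ⊆ w.edges.toFinset := by
    intro e he
    rw [List.mem_toFinset]
    obtain ⟨a, _, rfl⟩ := Finset.mem_image.1 he
    exact hmem a
  have hcardE : w.edges.toFinset.card = M := by
    rw [List.toFinset_card_of_nodup hw.isCycle.edges_nodup, Walk.length_edges,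
      hw.length_eq, hcard]
  have hSeq : S = w.edges.toFinset :=
    Finset.eq_of_subset_of_card_le hsub (by omega)
  intro e
  rw [← List.mem_toFinset, ← hSeq, hS]
  simp only [Finset.mem_image, Finset.mem_univ, true_and]
  exact ⟨fun ⟨a, h⟩ => ⟨a, h.symm⟩, fun ⟨a, h⟩ => ⟨a, h.symm⟩⟩

lemma enum_of_hamCycle (hM : 3 ≤ M) (hcard : Fintype.card V = M)
    {v : V} {w : G.Walk v v} (hw : w.IsHamiltonianCycle) :
    ∃ g : ZMod M → V, Function.Bijective g ∧
      ∀ a : ZMod M, s(g a, g (a+1)) ∈ w.edges := by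
  haveI : NeZero M := ⟨by omega⟩
  have hlen : w.length = M := by rw [hw.length_eq, hcard]
  set g : ZMod M → V := fun a => w.getVert (a.val + 1) with hg
  have htail : w.support.tail = (List.range M).map (fun t : ℕ => w.getVert (t+1)) := by
    rw [support_eq_map_getVert w, hlen, List.range_succ_eq_map]
    simp [List.map_map, Function.comp_def]
  have hinj : Function.Injective g := by
    intro a b h
    have hnd := hw.isCycle.support_nodup
    rw [htail] at hnd
    have := List.inj_on_of_nodup_map hnd (List.mem_range.2 (ZMod.val_lt a))
      (List.mem_range.2 (ZMod.val_lt b)) h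
    calc a = ((a.val : ℕ) : ZMod M) := (ZMod.natCast_rightInverse a).symm
    _ = ((b.val : ℕ) : ZMod M) := by rw [this]
    _ = b := ZMod.natCast_rightInverse b
  refine ⟨g, (Fintype.bijective_iff_injective_and_card g).2
    ⟨hinj, by rw [ZMod.card, hcard]⟩, ?_⟩
  intro a
  by_cases h : a.val + 1 < M
  · have hval : (a + 1).val = a.val + 1 := by
      have : a + 1 = ((a.val + 1 : ℕ) : ZMod M) := by
        push_cast
        rw [ZMod.natCast_rightInverse a]
      rw [this, ZMod.val_cast_of_lt h]
    have := edge_getVert_mem w (t := a.val + 1) (by omega)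
    rw [hg]
    simpa [hval] using this
  · have hv : a.val = M - 1 := by have := ZMod.val_lt a; omega
    have ha1 : a + 1 = 0 := by
      have : a + 1 = ((a.val + 1 : ℕ) : ZMod M) := by
        push_cast
        rw [ZMod.natCast_rightInverse a]
      rw [this, hv, Nat.sub_add_cancel (by omega), ZMod.natCast_self]
    have hga : g a = w.getVert 0 := by
      show w.getVert (a.val + 1) = w.getVert 0
      rw [hv, Nat.sub_add_cancel (show 1 ≤ M by omega), ← hlen, Walk.getVert_length,
        Walk.getVert_zero]
    have h0 := edge_getVert_mem w (t := 0) (by omega)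
    have hga1 : g (a + 1) = w.getVert 1 := by
      rw [ha1]
      show w.getVert ((0 : ZMod M).val + 1) = w.getVert 1
      simp
    show s(g a, g (a+1)) ∈ w.edges
    rw [hga, hga1]
    simpa using h0

lemma hamDecomp_of_enum {ι : Type*} (G : SimpleGraph V) (hM : 3 ≤ M)
    (hcard : Fintype.card V = M) (g : ι → ZMod M → V)
    (hbij : ∀ i, Function.Bijective (g i))
    (hadj : ∀ i a, G.Adj (g i a) (g i (a+1)))
    (hdisj : ∀ i j a b, i ≠ j → s(g i a, g i (a+1)) ≠ s(g j b, g j (b+1)))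
    (hcover : ∀ e ∈ G.edgeSet, ∃ i a, e = s(g i a, g i (a+1))) :
    ∃ C : ι → Σ v, G.Walk v v,
      (∀ i, (C i).2.IsHamiltonianCycle) ∧
      (∀ i j, i ≠ j → ∀ e, e ∈ (C i).2.edges → e ∉ (C j).2.edges) ∧
      (∀ e ∈ G.edgeSet, ∃ i, e ∈ (C i).2.edges) := by
  choose w hw hiff using fun i =>
    exists_hamCycle_of_enum G hM hcard (g i) (hbij i) (hadj i)
  refine ⟨fun i => ⟨g i 0, w i⟩, fun i => hw i, ?_, ?_⟩
  · intro i j hij e hei hej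
    obtain ⟨a, rfl⟩ := (hiff i e).1 hei
    obtain ⟨b, hb⟩ := (hiff j _).1 hej
    exact hdisj i j a b hij hb
  · intro e he
    obtain ⟨i, a, rfl⟩ := hcover e he
    exact ⟨i, (hiff i _).2 ⟨a, rfl⟩⟩

end Enum


section Kotzig
variable {M : ℕ}

lemma one_ne_zero' (hM : 3 ≤ M) : (1 : ZMod M) ≠ 0 := by
  intro h
  have : ((1 : ℕ) : ZMod M) = ((0 : ℕ) : ZMod M) := by push_cast; exact h
  have := natInjZMod hM (by omega) (by omega) this
  omega

lemma val_add_one_of_lt {n : ℕ} [NeZero n] {a : ZMod n} (h : a.val + 1 < n) :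
    (a + 1).val = a.val + 1 := by
  have ha : a + 1 = ((a.val + 1 : ℕ) : ZMod n) := by
    push_cast
    rw [ZMod.natCast_rightInverse a]
  rw [ha, ZMod.val_cast_of_lt h]

lemma cast_sub_one (hM : 3 ≤ M) : ((M - 1 : ℕ) : ZMod M) = -1 := by
  rw [Nat.cast_sub (by omega), Nat.cast_one, ZMod.natCast_self, zero_sub]

/-- block index -/
def Qc (M : ℕ) (a : ZMod (M*M)) : ZMod M := ((a.val / M : ℕ) : ZMod M)
/-- offset in block -/
def Sc (M : ℕ) (a : ZMod (M*M)) : ZMod M := ((a.val % M : ℕ) : ZMod M)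

lemma MM_pos (hM : 3 ≤ M) : M * M ≠ 0 := Nat.mul_ne_zero (by omega) (by omega)

lemma qs_step (hM : 3 ≤ M) (a : ZMod (M*M)) :
    (a.val % M ≠ M - 1 ∧ Sc M a ≠ -1 ∧ Qc M (a+1) = Qc M a ∧ Sc M (a+1) = Sc M a + 1) ∨
    (a.val % M = M - 1 ∧ Sc M a = -1 ∧ Qc M (a+1) = Qc M a + 1 ∧ Sc M (a+1) = 0) := by
  haveI : NeZero M := ⟨by omega⟩
  haveI : NeZero (M*M) := ⟨MM_pos hM⟩
  have hdm := Nat.div_add_mod a.val M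
  have hvlt : a.val < M * M := ZMod.val_lt a
  have hmlt : a.val % M < M := Nat.mod_lt _ (by omega)
  have hMM1 : M * M - 1 = M * (M - 1) + (M - 1) := by
    have h2 : M * (M - 1) + M = M * M := by
      obtain ⟨m, rfl⟩ : ∃ m, M = m + 3 := ⟨M - 3, by omega⟩
      have h3 : (m+3) - 1 = m + 2 := by omega
      rw [h3]; ring
    omega
  by_cases hmod : a.val % M = M - 1
  · right
    have hsc : Sc M a = -1 := by
      show ((a.val % M : ℕ) : ZMod M) = -1
      rw [hmod, cast_sub_one hM]
    by_cases hlast : a.val + 1 = M * M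
    · have hval0 : (a + 1).val = 0 := by
        have h0 : a + 1 = 0 := by
          have ha : a = ((a.val : ℕ) : ZMod (M*M)) := (ZMod.natCast_rightInverse a).symm
          rw [ha, ← Nat.cast_one, ← Nat.cast_add, hlast, ZMod.natCast_self]
        rw [h0, ZMod.val_zero]
      have hdiv : a.val / M = M - 1 := by
        have hmm : M * (a.val / M) = M * (M - 1) := by omega
        exact Nat.eq_of_mul_eq_mul_left (by omega) hmm
      refine ⟨hmod, hsc, ?_, ?_⟩
      · show ((_ : ℕ) : ZMod M) = ((_ : ℕ) : ZMod M) + 1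
        rw [hval0, hdiv, Nat.zero_div, Nat.cast_zero, cast_sub_one hM]
        ring
      · show ((_ : ℕ) : ZMod M) = 0
        rw [hval0, Nat.zero_mod, Nat.cast_zero]
    · have hval : (a+1).val = a.val + 1 := val_add_one_of_lt (by omega)
      have hfac : a.val + 1 = M * (a.val / M + 1) := by
        rw [Nat.mul_add, Nat.mul_one]; omega
      have hdiv : (a.val + 1) / M = a.val / M + 1 := by
        rw [hfac, Nat.mul_div_cancel_left _ (show 0 < M by omega)]
      have hmod0 : (a.val + 1) % M = 0 := by rw [hfac]; exact Nat.mul_mod_right _ _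
      refine ⟨hmod, hsc, ?_, ?_⟩
      · show ((_ : ℕ) : ZMod M) = ((_ : ℕ) : ZMod M) + 1
        rw [hval, hdiv]; push_cast; ring
      · show ((_ : ℕ) : ZMod M) = 0
        rw [hval, hmod0, Nat.cast_zero]
  · left
    have hsne : Sc M a ≠ -1 := by
      intro h
      apply hmod
      refine natInjZMod hM hmlt (by omega) ?_
      show ((a.val % M : ℕ) : ZMod M) = ((M - 1 : ℕ) : ZMod M)
      rw [cast_sub_one hM]; exact h
    have hlast : a.val + 1 ≠ M * M := by
      intro h
      apply hmod
      have hav : a.val = M * M - 1 := by omega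
      rw [hav, hMM1, Nat.mul_add_mod]
      exact Nat.mod_eq_of_lt (by omega)
    have hval : (a+1).val = a.val + 1 := val_add_one_of_lt (by omega)
    have hsplit : a.val + 1 = M * (a.val / M) + (a.val % M + 1) := by omega
    have hdiv : (a.val + 1)/M = a.val / M := by
      rw [hsplit, Nat.mul_add_div (show 0 < M by omega)]
      rw [Nat.div_eq_of_lt (show a.val % M + 1 < M by omega), Nat.add_zero]
    have hmod1 : (a.val + 1) % M = a.val % M + 1 := by
      rw [hsplit, Nat.mul_add_mod]
      exact Nat.mod_eq_of_lt (by omega)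
    refine ⟨hmod, hsne, ?_, ?_⟩
    · show ((_ : ℕ) : ZMod M) = ((_ : ℕ) : ZMod M)
      rw [hval, hdiv]
    · show ((_ : ℕ) : ZMod M) = ((_ : ℕ) : ZMod M) + 1
      rw [hval, hmod1]; push_cast; ring

lemma qs_surj (hM : 3 ≤ M) (q0 s0 : ZMod M) :
    ∃ a : ZMod (M*M), Qc M a = q0 ∧ Sc M a = s0 ∧ (a.val % M = M - 1 ↔ s0 = -1) := by
  haveI : NeZero M := ⟨by omega⟩
  haveI : NeZero (M*M) := ⟨MM_pos hM⟩
  have hq : q0.val < M := ZMod.val_lt q0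
  have hs : s0.val < M := ZMod.val_lt s0
  have hlt : s0.val + M * q0.val < M * M := by
    have h1 : M * q0.val + M ≤ M * M := by
      have := Nat.mul_le_mul_left M (show q0.val + 1 ≤ M by omega)
      rw [Nat.mul_add, Nat.mul_one] at this
      exact this
    omega
  have hval : ((s0.val + M * q0.val : ℕ) : ZMod (M*M)).val = s0.val + M * q0.val :=
    ZMod.val_cast_of_lt hlt
  have hdiv : (s0.val + M * q0.val) / M = q0.val := by
    rw [Nat.add_mul_div_left _ _ (show 0 < M by omega), Nat.div_eq_of_lt hs, Nat.zero_add]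
  have hmod : (s0.val + M * q0.val) % M = s0.val := by
    rw [Nat.add_mul_mod_self_left, Nat.mod_eq_of_lt hs]
  refine ⟨((s0.val + M * q0.val : ℕ) : ZMod (M*M)), ?_, ?_, ?_⟩
  · show ((_ : ℕ) : ZMod M) = q0
    rw [hval, hdiv]
    exact ZMod.natCast_rightInverse q0
  · show ((_ : ℕ) : ZMod M) = s0
    rw [hval, hmod]
    exact ZMod.natCast_rightInverse s0
  · rw [hval, hmod]
    constructor
    · intro h
      rw [← ZMod.natCast_rightInverse s0, h, cast_sub_one hM]
    · intro h
      have h1 : ((s0.val : ℕ) : ZMod M) = ((M - 1 : ℕ) : ZMod M) := by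
        rw [cast_sub_one hM, ZMod.natCast_rightInverse s0, h]
      exact natInjZMod hM hs (by omega) h1

lemma qs_inj (hM : 3 ≤ M) {a b : ZMod (M*M)} (hq : Qc M a = Qc M b)
    (hs : Sc M a = Sc M b) : a = b := by
  haveI : NeZero M := ⟨by omega⟩
  haveI : NeZero (M*M) := ⟨MM_pos hM⟩
  have hda : a.val / M < M := Nat.div_lt_of_lt_mul (ZMod.val_lt a)
  have hdb : b.val / M < M := Nat.div_lt_of_lt_mul (ZMod.val_lt b)
  have h1 : a.val / M = b.val / M := natInjZMod hM hda hdb hq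
  have h2 : a.val % M = b.val % M :=
    natInjZMod hM (Nat.mod_lt _ (by omega)) (Nat.mod_lt _ (by omega)) hs
  have h3 : a.val = b.val := by
    have ha := Nat.div_add_mod a.val M
    have hb := Nat.div_add_mod b.val M
    rw [h1, h2] at ha
    omega
  calc a = ((a.val : ℕ) : ZMod (M*M)) := (ZMod.natCast_rightInverse a).symm
  _ = ((b.val : ℕ) : ZMod (M*M)) := by rw [h3]
  _ = b := ZMod.natCast_rightInverse b


lemma cyc_adj_iff {x y : ZMod M} :
    (cycGraph M).Adj x y ↔ x ≠ y ∧ (x - y = 1 ∨ y - x = 1) := by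
  rw [_root_.cycGraph, SimpleGraph.fromRel_adj]

def gA (M : ℕ) (a : ZMod (M*M)) : ZMod M × ZMod M :=
  (-(Qc M a), -(Qc M a) + 1 + Sc M a)

def gB (M : ℕ) (a : ZMod (M*M)) : ZMod M × ZMod M :=
  (-(Qc M a) + Sc M a, -(Qc M a))

lemma gA_adj (hM : 3 ≤ M) (a : ZMod (M*M)) :
    (cycGraph M □ cycGraph M).Adj (gA M a) (gA M (a+1)) := by
  rcases qs_step hM a with ⟨_, hsa, hqa, hsa'⟩ | ⟨_, hsa, hqa, hsa'⟩
  · refine Or.inr ⟨?_, ?_⟩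
    · rw [cyc_adj_iff]
      refine ⟨?_, Or.inr ?_⟩
      · show -(Qc M a)+1+Sc M a ≠ -(Qc M (a+1))+1+Sc M (a+1)
        rw [hqa, hsa']
        intro h
        exact one_ne_zero' hM (by linear_combination -h)
      · show (-(Qc M (a+1))+1+Sc M (a+1)) - (-(Qc M a)+1+Sc M a) = 1
        rw [hqa, hsa']; ring
    · show -(Qc M a) = -(Qc M (a+1))
      rw [hqa]
  · refine Or.inl ⟨?_, ?_⟩
    · rw [cyc_adj_iff]
      refine ⟨?_, Or.inl ?_⟩
      · show -(Qc M a) ≠ -(Qc M (a+1))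
        rw [hqa]
        intro h
        exact one_ne_zero' hM (by linear_combination h)
      · show -(Qc M a) - (-(Qc M (a+1))) = 1
        rw [hqa]; ring
    · show -(Qc M a)+1+Sc M a = -(Qc M (a+1))+1+Sc M (a+1)
      rw [hqa, hsa', hsa]; ring

lemma gB_adj (hM : 3 ≤ M) (a : ZMod (M*M)) :
    (cycGraph M □ cycGraph M).Adj (gB M a) (gB M (a+1)) := by
  rcases qs_step hM a with ⟨_, hsa, hqa, hsa'⟩ | ⟨_, hsa, hqa, hsa'⟩
  · refine Or.inl ⟨?_, ?_⟩
    · rw [cyc_adj_iff]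
      refine ⟨?_, Or.inr ?_⟩
      · show -(Qc M a)+Sc M a ≠ -(Qc M (a+1))+Sc M (a+1)
        rw [hqa, hsa']
        intro h
        exact one_ne_zero' hM (by linear_combination -h)
      · show (-(Qc M (a+1))+Sc M (a+1)) - (-(Qc M a)+Sc M a) = 1
        rw [hqa, hsa']; ring
    · show -(Qc M a) = -(Qc M (a+1))
      rw [hqa]
  · refine Or.inr ⟨?_, ?_⟩
    · rw [cyc_adj_iff]
      refine ⟨?_, Or.inl ?_⟩
      · show -(Qc M a) ≠ -(Qc M (a+1))
        rw [hqa]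
        intro h
        exact one_ne_zero' hM (by linear_combination h)
      · show -(Qc M a) - (-(Qc M (a+1))) = 1
        rw [hqa]; ring
    · show -(Qc M a) + Sc M a = -(Qc M (a+1)) + Sc M (a+1)
      rw [hqa, hsa', hsa]; ring

lemma card_eq (M : ℕ) [NeZero M] :
    Fintype.card (ZMod M × ZMod M) = M * M := by
  rw [Fintype.card_prod, ZMod.card]

lemma gA_bij (hM : 3 ≤ M) : Function.Bijective (gA M) := by
  haveI : NeZero M := ⟨by omega⟩
  haveI : NeZero (M*M) := ⟨MM_pos hM⟩
  refine (Fintype.bijective_iff_injective_and_card _).2 ⟨?_, by rw [ZMod.card, card_eq M]⟩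
  intro a b h
  rw [gA, gA, Prod.mk.injEq] at h
  obtain ⟨h1, h2⟩ := h
  exact qs_inj hM (neg_injective h1) (by linear_combination h2 - h1)

lemma gB_bij (hM : 3 ≤ M) : Function.Bijective (gB M) := by
  haveI : NeZero M := ⟨by omega⟩
  haveI : NeZero (M*M) := ⟨MM_pos hM⟩
  refine (Fintype.bijective_iff_injective_and_card _).2 ⟨?_, by rw [ZMod.card, card_eq M]⟩
  intro a b h
  rw [gB, gB, Prod.mk.injEq] at h
  obtain ⟨h1, h2⟩ := h
  exact qs_inj hM (neg_injective h2) (by linear_combination h1 - h2)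

lemma gAB_disj (hM : 3 ≤ M) (a b : ZMod (M*M)) :
    s(gA M a, gA M (a+1)) ≠ s(gB M b, gB M (b+1)) := by
  intro h
  rw [gA, gA, gB, gB] at h
  rcases qs_step hM a with ⟨_, hsa, hqa, hsa'⟩ | ⟨_, hsa, hqa, hsa'⟩ <;>
    rcases qs_step hM b with ⟨_, hsb, hqb, hsb'⟩ | ⟨_, hsb, hqb, hsb'⟩ <;>
    rw [hqa, hsa', hqb, hsb'] at h <;>
    simp only [Sym2.eq, Sym2.rel_iff', Prod.mk.injEq, Prod.swap_prod_mk] at h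
  · rcases h with ⟨⟨e1, e2⟩, ⟨e3, e4⟩⟩ | ⟨⟨e1, e2⟩, ⟨e3, e4⟩⟩
    · exact one_ne_zero' hM (by linear_combination e1 - e3)
    · exact one_ne_zero' hM (by linear_combination e3 - e1)
  · rcases h with ⟨⟨e1, e2⟩, ⟨e3, e4⟩⟩ | ⟨⟨e1, e2⟩, ⟨e3, e4⟩⟩
    · exact two_ne_zero' hM (by linear_combination e4 - e2)
    · exact hsa (by linear_combination e2 - e1)
  · rcases h with ⟨⟨e1, e2⟩, ⟨e3, e4⟩⟩ | ⟨⟨e1, e2⟩, ⟨e3, e4⟩⟩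
    · exact two_ne_zero' hM (by linear_combination e1 - e3)
    · exact hsb (by linear_combination e4 - e1)
  · rcases h with ⟨⟨e1, e2⟩, ⟨e3, e4⟩⟩ | ⟨⟨e1, e2⟩, ⟨e3, e4⟩⟩
    · exact one_ne_zero' hM (by linear_combination e4 - e3)
    · exact one_ne_zero' hM (by linear_combination e1 - e4)
lemma gA_cover_h (hM : 3 ≤ M) (i c : ZMod M) (hc : c ≠ i) :
    ∃ a : ZMod (M*M), gA M a = (i, c) ∧ gA M (a+1) = (i, c+1) := by
  obtain ⟨a, hq, hs, hiff⟩ := qs_surj hM (-i) (c - i - 1)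
  have hmod : a.val % M ≠ M - 1 := fun h => hc (by linear_combination hiff.1 h)
  rcases qs_step hM a with ⟨_, _, hq', hs'⟩ | ⟨h1, _, _, _⟩
  · refine ⟨a, ?_, ?_⟩
    · simp only [gA, hq, hs, Prod.mk.injEq]
      constructor <;> ring
    · simp only [gA, hq', hs', hq, hs, Prod.mk.injEq]
      constructor <;> ring
  · exact absurd h1 hmod

lemma gA_cover_v (hM : 3 ≤ M) (j : ZMod M) :
    ∃ a : ZMod (M*M), gA M a = (j, j) ∧ gA M (a+1) = (j-1, j) := by
  obtain ⟨a, hq, hs, hiff⟩ := qs_surj hM (-j) (-1)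
  have hmod : a.val % M = M - 1 := hiff.2 rfl
  rcases qs_step hM a with ⟨h1, _, _, _⟩ | ⟨_, _, hq', hs'⟩
  · exact absurd hmod h1
  · refine ⟨a, ?_, ?_⟩
    · simp only [gA, hq, hs, Prod.mk.injEq]
      constructor <;> ring
    · simp only [gA, hq', hs', hq, hs, Prod.mk.injEq]
      constructor <;> ring

lemma gB_cover_v (hM : 3 ≤ M) (x j : ZMod M) (hx : x ≠ j - 1) :
    ∃ b : ZMod (M*M), gB M b = (x, j) ∧ gB M (b+1) = (x+1, j) := by
  obtain ⟨b, hq, hs, hiff⟩ := qs_surj hM (-j) (x - j)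
  have hmod : b.val % M ≠ M - 1 := fun h => hx (by linear_combination hiff.1 h)
  rcases qs_step hM b with ⟨_, _, hq', hs'⟩ | ⟨h1, _, _, _⟩
  · refine ⟨b, ?_, ?_⟩
    · simp only [gB, hq, hs, Prod.mk.injEq]
      constructor <;> ring
    · simp only [gB, hq', hs', hq, hs, Prod.mk.injEq]
      constructor <;> ring
  · exact absurd h1 hmod

lemma gB_cover_h (hM : 3 ≤ M) (i : ZMod M) :
    ∃ b : ZMod (M*M), gB M b = (i, i+1) ∧ gB M (b+1) = (i, i) := by
  obtain ⟨b, hq, hs, hiff⟩ := qs_surj hM (-i-1) (-1)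
  have hmod : b.val % M = M - 1 := hiff.2 rfl
  rcases qs_step hM b with ⟨h1, _, _, _⟩ | ⟨_, _, hq', hs'⟩
  · exact absurd hmod h1
  · refine ⟨b, ?_, ?_⟩
    · simp only [gB, hq, hs, Prod.mk.injEq]
      constructor <;> ring
    · simp only [gB, hq', hs', hq, hs, Prod.mk.injEq]
      constructor <;> ring

lemma claimV (hM : 3 ≤ M) (x j : ZMod M) :
    (∃ a, s(gA M a, gA M (a+1)) = s((x,j),(x+1,j))) ∨
    (∃ b, s(gB M b, gB M (b+1)) = s((x,j),(x+1,j))) := by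
  by_cases hx : x = j - 1
  · left
    obtain ⟨a, h1, h2⟩ := gA_cover_v hM j
    refine ⟨a, ?_⟩
    rw [h1, h2, hx, show j - 1 + 1 = j from by ring]
    exact Sym2.eq_swap
  · right
    obtain ⟨b, h1, h2⟩ := gB_cover_v hM x j hx
    exact ⟨b, by rw [h1, h2]⟩

lemma claimH (hM : 3 ≤ M) (i c : ZMod M) :
    (∃ a, s(gA M a, gA M (a+1)) = s((i,c),(i,c+1))) ∨
    (∃ b, s(gB M b, gB M (b+1)) = s((i,c),(i,c+1))) := by
  by_cases hc : c = i
  · right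
    obtain ⟨b, h1, h2⟩ := gB_cover_h hM i
    refine ⟨b, ?_⟩
    rw [h1, h2, hc]
    exact Sym2.eq_swap
  · left
    obtain ⟨a, h1, h2⟩ := gA_cover_h hM i c hc
    exact ⟨a, by rw [h1, h2]⟩

lemma gAB_cover (hM : 3 ≤ M) (e : Sym2 (ZMod M × ZMod M))
    (he : e ∈ (cycGraph M □ cycGraph M).edgeSet) :
    (∃ a, e = s(gA M a, gA M (a+1))) ∨ (∃ b, e = s(gB M b, gB M (b+1))) := by
  induction e using Sym2.ind with
  | _ p q =>
    rw [SimpleGraph.mem_edgeSet] at he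
    obtain ⟨x, y⟩ := p
    obtain ⟨x', y'⟩ := q
    rcases he with ⟨hadj, heq⟩ | ⟨hadj, heq⟩
    · simp only at heq
      subst heq
      rw [cyc_adj_iff] at hadj
      obtain ⟨hne, hdir | hdir⟩ := hadj
      · have hx : x = x' + 1 := by linear_combination hdir
        subst hx
        rcases claimV hM x' y with ⟨a, h⟩ | ⟨b, h⟩
        · exact Or.inl ⟨a, by rw [h]; exact Sym2.eq_swap⟩
        · exact Or.inr ⟨b, by rw [h]; exact Sym2.eq_swap⟩
      · have hx : x' = x + 1 := by linear_combination hdir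
        subst hx
        rcases claimV hM x y with ⟨a, h⟩ | ⟨b, h⟩
        · exact Or.inl ⟨a, h.symm⟩
        · exact Or.inr ⟨b, h.symm⟩
    · simp only at heq
      subst heq
      rw [cyc_adj_iff] at hadj
      obtain ⟨hne, hdir | hdir⟩ := hadj
      · have hy : y = y' + 1 := by linear_combination hdir
        subst hy
        rcases claimH hM x y' with ⟨a, h⟩ | ⟨b, h⟩
        · exact Or.inl ⟨a, by rw [h]; exact Sym2.eq_swap⟩
        · exact Or.inr ⟨b, by rw [h]; exact Sym2.eq_swap⟩
      · have hy : y' = y + 1 := by linear_combination hdir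
        subst hy
        rcases claimH hM x y with ⟨a, h⟩ | ⟨b, h⟩
        · exact Or.inl ⟨a, h.symm⟩
        · exact Or.inr ⟨b, h.symm⟩

lemma kotzig (M : ℕ) (hM : 3 ≤ M) :
    ∃ H : Fin 2 → Σ p, (cycGraph M □ cycGraph M).Walk p p,
      (∀ i, (H i).2.IsHamiltonianCycle) ∧
      (∀ i j, i ≠ j → ∀ e, e ∈ (H i).2.edges → e ∉ (H j).2.edges) ∧
      (∀ e ∈ (cycGraph M □ cycGraph M).edgeSet, ∃ i, e ∈ (H i).2.edges) := by
  haveI : NeZero M := ⟨by omega⟩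
  haveI : NeZero (M*M) := ⟨MM_pos hM⟩
  refine hamDecomp_of_enum (M := M*M) _ (by nlinarith) (card_eq M) ![gA M, gB M] ?_ ?_ ?_ ?_
  · intro i
    fin_cases i
    · exact gA_bij hM
    · exact gB_bij hM
  · intro i a
    fin_cases i
    · exact gA_adj hM a
    · exact gB_adj hM a
  · intro i j a b hij
    fin_cases i <;> fin_cases j
    · exact absurd rfl hij
    · exact gAB_disj hM a b
    · exact fun h => gAB_disj hM b a h.symm
    · exact absurd rfl hij
  · intro e he
    rcases gAB_cover hM e he with ⟨a, h⟩ | ⟨b, h⟩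
    · exact ⟨0, a, h⟩
    · exact ⟨1, b, h⟩

end Kotzig

section Main
variable {V : Type*} [Fintype V] [DecidableEq V]

lemma psi_bij {G : SimpleGraph V} {N : ℕ} {k : ℕ}
    (φ : Fin k → ZMod N → V) (hbij : ∀ i, Function.Bijective (φ i))
    (ψ : Fin k → ((cycGraph N □ cycGraph N) →g (G □ G)))
    (hψ : ∀ i (p : ZMod N × ZMod N), ψ i p = (φ i p.1, φ i p.2)) (i : Fin k) :
    Function.Bijective (ψ i) := by
  constructor
  · intro p q h
    rw [hψ i p, hψ i q, Prod.mk.injEq] at h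
    exact Prod.ext ((hbij i).1 h.1) ((hbij i).1 h.2)
  · intro ⟨u, v⟩
    obtain ⟨a, ha⟩ := (hbij i).2 u
    obtain ⟨b, hb⟩ := (hbij i).2 v
    exact ⟨(a, b), by rw [hψ i (a,b)]; rw [ha, hb]⟩

lemma main_decomp (G : SimpleGraph V) (N : ℕ) (hN : 3 ≤ N) (hcard : Fintype.card V = N)
    (k : ℕ) (E : Fin k → Σ v, G.Walk v v)
    (hE1 : ∀ i, (E i).2.IsHamiltonianCycle)
    (hE2 : ∀ i j, i ≠ j → ∀ e, e ∈ (E i).2.edges → e ∉ (E j).2.edges)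
    (hE3 : ∀ e ∈ G.edgeSet, ∃ i, e ∈ (E i).2.edges)
    (φ : Fin k → ZMod N → V) (hbij : ∀ i, Function.Bijective (φ i))
    (hφE : ∀ i (a : ZMod N), s(φ i a, φ i (a + 1)) ∈ (E i).2.edges)
    (H : Fin 2 → Σ p, (cycGraph N □ cycGraph N).Walk p p)
    (hH1 : ∀ j, (H j).2.IsHamiltonianCycle)
    (hH2 : ∀ i j, i ≠ j → ∀ e, e ∈ (H i).2.edges → e ∉ (H j).2.edges)
    (hH3 : ∀ e ∈ (cycGraph N □ cycGraph N).edgeSet, ∃ j, e ∈ (H j).2.edges)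
    (ψ : Fin k → ((cycGraph N □ cycGraph N) →g (G □ G)))
    (hψ : ∀ i (p : ZMod N × ZMod N), ψ i p = (φ i p.1, φ i p.2)) :
    (∀ q : Fin k × Fin 2, ((H q.2).2.map (ψ q.1)).IsHamiltonianCycle) ∧
    (∀ q r : Fin k × Fin 2, q ≠ r → ∀ e, e ∈ ((H q.2).2.map (ψ q.1)).edges →
        e ∉ ((H r.2).2.map (ψ r.1)).edges) ∧
    (∀ e ∈ (G □ G).edgeSet, ∃ q : Fin k × Fin 2, e ∈ ((H q.2).2.map (ψ q.1)).edges) := by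
  haveI : NeZero N := ⟨by omega⟩
  have hψb : ∀ i, Function.Bijective (ψ i) := psi_bij φ hbij ψ hψ
  -- the structure of edges in the image
  have hedge : ∀ (i : Fin k) (j : Fin 2) e, e ∈ ((H j).2.map (ψ i)).edges →
      ∃ u x y : V, x ≠ y ∧ s(x,y) ∈ (E i).2.edges ∧
        (e = s((u,x),(u,y)) ∨ e = s((x,u),(y,u))) := by
    intro i j e he
    rw [Walk.edges_map, List.mem_map] at he
    obtain ⟨e', he', rfl⟩ := he
    have he2 := (H j).2.edges_subset_edgeSet he'
    clear he'
    induction e' using Sym2.ind with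
    | _ p q =>
      obtain ⟨a, b⟩ := p
      obtain ⟨a', b'⟩ := q
      rw [SimpleGraph.mem_edgeSet] at he2
      rcases he2 with ⟨hadj, heq⟩ | ⟨hadj, heq⟩
      · simp only at heq
        subst heq
        rw [cyc_adj_iff] at hadj
        obtain ⟨hne, hdir⟩ := hadj
        have hmem : s(φ i a, φ i a') ∈ (E i).2.edges := by
          rcases hdir with hd | hd
          · have : a = a' + 1 := by linear_combination hd
            subst this
            have := hφE i a'
            rw [Sym2.eq_swap]
            exact this
          · have : a' = a + 1 := by linear_combination hd
            subst this
            exact hφE i a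
        refine ⟨φ i b, φ i a, φ i a', fun h => hne ((hbij i).1 h), hmem, Or.inr ?_⟩
        rw [Sym2.map_pair_eq, hψ i (a, b), hψ i (a', b)]
      · simp only at heq
        subst heq
        rw [cyc_adj_iff] at hadj
        obtain ⟨hne, hdir⟩ := hadj
        have hmem : s(φ i b, φ i b') ∈ (E i).2.edges := by
          rcases hdir with hd | hd
          · have : b = b' + 1 := by linear_combination hd
            subst this
            have := hφE i b'
            rw [Sym2.eq_swap]
            exact this
          · have : b' = b + 1 := by linear_combination hd
            subst this
            exact hφE i b
        refine ⟨φ i a, φ i b, φ i b', fun h => hne ((hbij i).1 h), hmem, Or.inl ?_⟩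
        rw [Sym2.map_pair_eq, hψ i (a, b), hψ i (a, b')]
  refine ⟨fun q => (hH1 q.2).map (f := ψ q.1) (hψb q.1), ?_, ?_⟩
  · -- disjointness
    intro q r hqr e heq her
    by_cases hik : q.1 = r.1
    · have hj : q.2 ≠ r.2 := by
        intro h2
        exact hqr (Prod.ext hik h2)
      rw [Walk.edges_map, List.mem_map] at heq her
      obtain ⟨e1, he1, rfl⟩ := heq
      obtain ⟨e2, he2, heq2⟩ := her
      rw [hik] at heq2
      have := Sym2.map.injective (hψb r.1).1 heq2
      exact hH2 q.2 r.2 hj e1 he1 (this ▸ he2)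
    · obtain ⟨u, x, y, hxy, hmq, hfq⟩ := hedge q.1 q.2 e heq
      obtain ⟨u', x', y', hxy', hmr, hfr⟩ := hedge r.1 r.2 e her
      have : s(x, y) = s(x', y') := by
        rcases hfq with rfl | rfl <;> rcases hfr with h | h <;>
          simp only [Sym2.eq, Sym2.rel_iff', Prod.mk.injEq, Prod.swap_prod_mk] at h
        · rcases h with ⟨⟨h1, h2⟩, h3, h4⟩ | ⟨⟨h1, h2⟩, h3, h4⟩
          · rw [h2, h4]
          · rw [h2, h4]; exact Sym2.eq_swap
        · rcases h with ⟨⟨h1, h2⟩, h3, h4⟩ | ⟨⟨h1, h2⟩, h3, h4⟩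
          · exact absurd (h2.trans h4.symm) hxy
          · exact absurd (h2.trans h4.symm) hxy
        · rcases h with ⟨⟨h1, h2⟩, h3, h4⟩ | ⟨⟨h1, h2⟩, h3, h4⟩
          · exact absurd (h1.trans h3.symm) hxy
          · exact absurd (h1.trans h3.symm) hxy
        · rcases h with ⟨⟨h1, h2⟩, h3, h4⟩ | ⟨⟨h1, h2⟩, h3, h4⟩
          · rw [h1, h3]
          · rw [h1, h3]; exact Sym2.eq_swap
      exact hE2 q.1 r.1 hik _ hmq (this ▸ hmr)
  · -- coverage
    intro e he
    induction e using Sym2.ind with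
    | _ p q =>
      obtain ⟨u, v⟩ := p
      obtain ⟨u', v'⟩ := q
      rw [SimpleGraph.mem_edgeSet] at he
      rcases he with ⟨hadj, heq⟩ | ⟨hadj, heq⟩
      · simp only at heq
        subst heq
        obtain ⟨i, hmem⟩ := hE3 s(u, u') hadj
        obtain ⟨a, ha⟩ := (edges_eq_of_enum hN hcard (hE1 i) (φ i) (hbij i).1 (hφE i)
          s(u, u')).1 hmem
        obtain ⟨b, rfl⟩ := (hbij i).2 v
        have hbox : s(((a : ZMod N), b), (a+1, b)) ∈ (cycGraph N □ cycGraph N).edgeSet := by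
          rw [SimpleGraph.mem_edgeSet]
          refine Or.inl ⟨?_, rfl⟩
          rw [cyc_adj_iff]
          exact ⟨fun h => one_ne_zero' hN (by linear_combination -h), Or.inr (by ring)⟩
        obtain ⟨j, hej⟩ := hH3 _ hbox
        refine ⟨(i, j), ?_⟩
        rw [Walk.edges_map, List.mem_map]
        refine ⟨_, hej, ?_⟩
        rw [Sym2.map_pair_eq, hψ i (a, b), hψ i (a+1, b)]
        simp only [Sym2.eq, Sym2.rel_iff', Prod.mk.injEq, Prod.swap_prod_mk] at ha ⊢
        rcases ha with ⟨h1, h2⟩ | ⟨h1, h2⟩ <;> simp [h1, h2]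
      · simp only at heq
        subst heq
        obtain ⟨i, hmem⟩ := hE3 s(v, v') hadj
        obtain ⟨a, ha⟩ := (edges_eq_of_enum hN hcard (hE1 i) (φ i) (hbij i).1 (hφE i)
          s(v, v')).1 hmem
        obtain ⟨b, rfl⟩ := (hbij i).2 u
        have hbox : s((b, (a : ZMod N)), (b, a+1)) ∈ (cycGraph N □ cycGraph N).edgeSet := by
          rw [SimpleGraph.mem_edgeSet]
          refine Or.inr ⟨?_, rfl⟩
          rw [cyc_adj_iff]
          exact ⟨fun h => one_ne_zero' hN (by linear_combination -h), Or.inr (by ring)⟩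
        obtain ⟨j, hej⟩ := hH3 _ hbox
        refine ⟨(i, j), ?_⟩
        rw [Walk.edges_map, List.mem_map]
        refine ⟨_, hej, ?_⟩
        rw [Sym2.map_pair_eq, hψ i (b, a), hψ i (b, a+1)]
        simp only [Sym2.eq, Sym2.rel_iff', Prod.mk.injEq, Prod.swap_prod_mk] at ha ⊢
        rcases ha with ⟨h1, h2⟩ | ⟨h1, h2⟩ <;> simp [h1, h2]

end Main

section Transfer

lemma transfer {V W : Type*} [DecidableEq V] [DecidableEq W]
    {Γ : SimpleGraph V} {Δ : SimpleGraph W} (θ : Γ ≃g Δ)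
    {ι ι' : Type*} (ρ : ι' ≃ ι) (C : ι → Σ v, Γ.Walk v v)
    (h1 : ∀ i, (C i).2.IsHamiltonianCycle)
    (h2 : ∀ i j, i ≠ j → ∀ e, e ∈ (C i).2.edges → e ∉ (C j).2.edges)
    (h3 : ∀ e ∈ Γ.edgeSet, ∃ i, e ∈ (C i).2.edges) :
    ∃ D : ι' → Σ w, Δ.Walk w w,
      (∀ i, (D i).2.IsHamiltonianCycle) ∧
      (∀ i j, i ≠ j → ∀ e, e ∈ (D i).2.edges → e ∉ (D j).2.edges) ∧
      (∀ e ∈ Δ.edgeSet, ∃ i, e ∈ (D i).2.edges) := by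
  refine ⟨fun i => ⟨θ (C (ρ i)).1, ((C (ρ i)).2.map θ.toHom)⟩, ?_, ?_, ?_⟩
  · intro i
    exact (h1 (ρ i)).map (f := θ.toHom) θ.toEquiv.bijective
  · intro i j hij e hei hej
    rw [Walk.edges_map, List.mem_map] at hei hej
    obtain ⟨e1, he1, rfl⟩ := hei
    obtain ⟨e2, he2, heq⟩ := hej
    have := Sym2.map.injective θ.toEquiv.injective heq
    exact h2 (ρ i) (ρ j) (fun h => hij (ρ.injective h)) e1 he1 (this ▸ he2)
  · intro e he
    induction e using Sym2.ind with
    | _ u v =>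
      rw [SimpleGraph.mem_edgeSet] at he
      have hadj : Γ.Adj (θ.symm u) (θ.symm v) := by
        have := θ.symm.map_adj_iff (v := u) (w := v)
        exact this.2 he
      obtain ⟨i, hi⟩ := h3 s(θ.symm u, θ.symm v) hadj
      refine ⟨ρ.symm i, ?_⟩
      rw [Walk.edges_map, List.mem_map]
      refine ⟨_, by rw [Equiv.apply_symm_apply]; exact hi, ?_⟩
      rw [Sym2.map_pair_eq]
      have hu : θ.toHom (θ.symm u) = u := θ.apply_symm_apply u
      have hv : θ.toHom (θ.symm v) = v := θ.apply_symm_apply v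
      rw [hu, hv]

end Transfer

section Hyper

def splitF (m m' : ℕ) : ((Fin m → Bool) × (Fin m' → Bool)) ≃ (Fin (m+m') → Bool) :=
  (Equiv.sumArrowEquivProdArrow (Fin m) (Fin m') Bool).symm.trans
    (Equiv.arrowCongr finSumFinEquiv (Equiv.refl Bool))

lemma splitF_apply (m m' : ℕ) (p : (Fin m → Bool) × (Fin m' → Bool)) (i : Fin (m+m')) :
    splitF m m' p i = Sum.elim p.1 p.2 (finSumFinEquiv.symm i) := by
  simp [splitF, Equiv.sumArrowEquivProdArrow, Equiv.arrowCongr]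

def hyperIso (m m' : ℕ) : ((hypercube m) □ (hypercube m')) ≃g hypercube (m + m') where
  toEquiv := splitF m m'
  map_rel_iff' := by
    intro p q
    constructor
    · rintro ⟨i0, hne, hrest⟩
      rw [splitF_apply, splitF_apply] at hne
      rcases hd : finSumFinEquiv.symm i0 with l | r
      · rw [hd] at hne
        refine Or.inl ⟨⟨l, hne, ?_⟩, ?_⟩
        · intro j hj
          have hne' : finSumFinEquiv (Sum.inl j) ≠ i0 := by
            intro hc
            rw [← hc, Equiv.symm_apply_apply] at hd
            exact hj (Sum.inl.inj hd)
          have := hrest _ hne'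
          rw [splitF_apply, splitF_apply, Equiv.symm_apply_apply] at this
          exact this
        · funext r
          have hne' : finSumFinEquiv (Sum.inr r) ≠ i0 := by
            intro hc
            rw [← hc, Equiv.symm_apply_apply] at hd
            exact Sum.inr_ne_inl hd
          have := hrest _ hne'
          rw [splitF_apply, splitF_apply, Equiv.symm_apply_apply] at this
          exact this
      · rw [hd] at hne
        refine Or.inr ⟨⟨r, hne, ?_⟩, ?_⟩
        · intro j hj
          have hne' : finSumFinEquiv (Sum.inr j) ≠ i0 := by
            intro hc
            rw [← hc, Equiv.symm_apply_apply] at hd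
            exact hj (Sum.inr.inj hd)
          have := hrest _ hne'
          rw [splitF_apply, splitF_apply, Equiv.symm_apply_apply] at this
          exact this
        · funext l
          have hne' : finSumFinEquiv (Sum.inl l) ≠ i0 := by
            intro hc
            rw [← hc, Equiv.symm_apply_apply] at hd
            exact Sum.inl_ne_inr hd
          have := hrest _ hne'
          rw [splitF_apply, splitF_apply, Equiv.symm_apply_apply] at this
          exact this
    · rintro (⟨⟨l, hne, hrest⟩, heq⟩ | ⟨⟨r, hne, hrest⟩, heq⟩)
      · refine ⟨finSumFinEquiv (Sum.inl l), ?_, ?_⟩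
        · rw [splitF_apply, splitF_apply, Equiv.symm_apply_apply]
          exact hne
        · intro j hj
          rw [splitF_apply, splitF_apply]
          rcases hd : finSumFinEquiv.symm j with l' | r'
          · have hl : l' ≠ l := by
              intro hc
              subst hc
              apply hj
              rw [← Equiv.apply_symm_apply finSumFinEquiv j, hd]
            exact hrest l' hl
          · show p.2 r' = q.2 r'
            rw [heq]
      · refine ⟨finSumFinEquiv (Sum.inr r), ?_, ?_⟩
        · rw [splitF_apply, splitF_apply, Equiv.symm_apply_apply]
          exact hne
        · intro j hj
          rw [splitF_apply, splitF_apply]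
          rcases hd : finSumFinEquiv.symm j with l' | r'
          · show p.1 l' = q.1 l'
            rw [heq]
          · have hr : r' ≠ r := by
              intro hc
              subst hc
              apply hj
              rw [← Equiv.apply_symm_apply finSumFinEquiv j, hd]
            exact hrest r' hr

end Hyper

section AdjEnum
variable {V : Type*}

lemma adj_of_enum {Γ : SimpleGraph V} {M : ℕ} {v : V} {w : Γ.Walk v v}
    (g : ZMod M → V) (hmem : ∀ a, s(g a, g (a+1)) ∈ w.edges) {x y : ZMod M}
    (h : (cycGraph M).Adj x y) : Γ.Adj (g x) (g y) := by
  rw [cyc_adj_iff] at h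
  obtain ⟨hne, hd | hd⟩ := h
  · have hxy : x = y + 1 := by linear_combination hd
    subst hxy
    have := w.edges_subset_edgeSet (hmem y)
    rw [SimpleGraph.mem_edgeSet] at this
    exact this.symm
  · have hxy : y = x + 1 := by linear_combination hd
    subst hxy
    have := w.edges_subset_edgeSet (hmem x)
    rwa [SimpleGraph.mem_edgeSet] at this

end AdjEnum

end HamAux

/-- If `{H₁, H₂}` is a Hamilton decomposition of `C_N □ C_N` and `{E₁, …, E_k}` is a
Hamilton decomposition of a graph `G` with `N ≥ 3` vertices, then
`{f(Eᵢ, Hⱼ) : 1 ≤ i ≤ k, 1 ≤ j ≤ 2}` is a Hamilton decomposition of `G □ G` into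
`2k` Hamiltonian cycles.  In particular, if `Q_{2n}` has a Hamilton decomposition
into `n` Hamiltonian cycles, then `Q_{4n}` has one into `2n` Hamiltonian cycles. -/
theorem hamDecomp_boxProd_two_dim {V : Type*} [Fintype V] [DecidableEq V]
    (G : SimpleGraph V) (N : ℕ) (hN : 3 ≤ N) (hcard : Fintype.card V = N) (k : ℕ)
    (E : Fin k → Σ v, G.Walk v v) (hE : IsHamDecomp G E)
    (φ : Fin k → ZMod N → V) (hbij : ∀ i, Function.Bijective (φ i))
    (hφE : ∀ i (a : ZMod N), s(φ i a, φ i (a + 1)) ∈ (E i).2.edges)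
    (H : Fin 2 → Σ p, (cycGraph N □ cycGraph N).Walk p p)
    (hH : IsHamDecomp (cycGraph N □ cycGraph N) H)
    (ψ : Fin k → ((cycGraph N □ cycGraph N) →g (G □ G)))
    (hψ : ∀ i (p : ZMod N × ZMod N), ψ i p = (φ i p.1, φ i p.2)) :
    IsHamDecomp (G □ G)
      (fun q : Fin k × Fin 2 => ⟨_, (H q.2).2.map (ψ q.1)⟩) ∧
    (∀ n : ℕ,
      (∃ C : Fin n → Σ v, (hypercube (2 * n)).Walk v v, IsHamDecomp (hypercube (2 * n)) C) →
      (∃ C : Fin (2 * n) → Σ v, (hypercube (4 * n)).Walk v v,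
        IsHamDecomp (hypercube (4 * n)) C)) := by
  obtain ⟨hE1, hE2, hE3⟩ := hE
  obtain ⟨hH1, hH2, hH3⟩ := hH
  constructor
  · exact HamAux.main_decomp G N hN hcard k E hE1 hE2 hE3 φ hbij hφE H hH1 hH2 hH3 ψ hψ
  · intro n hn
    rcases Nat.eq_zero_or_pos n with rfl | hpos
    · refine ⟨Fin.elim0, fun i => i.elim0, fun i => i.elim0, ?_⟩
      intro e he
      exfalso
      induction e using Sym2.ind with
      | _ u v =>
        rw [SimpleGraph.mem_edgeSet] at he
        obtain ⟨i, -⟩ := he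
        exact i.elim0
    · obtain ⟨C, hC1, hC2, hC3⟩ := hn
      have hN' : 3 ≤ 2 ^ (2 * n) := by
        have h22 : 2 ^ 2 ≤ 2 ^ (2 * n) := Nat.pow_le_pow_right (by norm_num) (by omega)
        omega
      have hcard' : Fintype.card (Fin (2 * n) → Bool) = 2 ^ (2 * n) := by
        simp [Fintype.card_fun]
      choose φ' hφbij hφmem using fun i => HamAux.enum_of_hamCycle hN' hcard' (hC1 i)
      obtain ⟨H', hH1', hH2', hH3'⟩ := HamAux.kotzig (2 ^ (2 * n)) hN'
      let ψ' : Fin n → ((cycGraph (2 ^ (2 * n)) □ cycGraph (2 ^ (2 * n))) →g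
          (hypercube (2 * n) □ hypercube (2 * n))) := fun i =>
        { toFun := fun p => (φ' i p.1, φ' i p.2),
          map_rel' := by
            rintro ⟨a, b⟩ ⟨a', b'⟩ (⟨hadj, heq⟩ | ⟨hadj, heq⟩)
            · simp only at heq
              subst heq
              exact Or.inl ⟨HamAux.adj_of_enum (φ' i) (hφmem i) hadj, rfl⟩
            · simp only at heq
              subst heq
              exact Or.inr ⟨HamAux.adj_of_enum (φ' i) (hφmem i) hadj, rfl⟩ }
      obtain ⟨m1, m2, m3⟩ := HamAux.main_decomp (hypercube (2 * n)) (2 ^ (2 * n)) hN'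
        hcard' n C hC1 hC2 hC3 φ' hφbij hφmem H' hH1' hH2' hH3' ψ' (fun i p => rfl)
      have h4n : 4 * n = 2 * n + 2 * n := by ring
      rw [h4n]
      obtain ⟨D, hD1, hD2, hD3⟩ := HamAux.transfer (HamAux.hyperIso (2 * n) (2 * n))
        ((finCongr (show 2 * n = n * 2 from by ring)).trans finProdFinEquiv.symm)
        (fun q : Fin n × Fin 2 => ⟨_, (H' q.2).2.map (ψ' q.1)⟩) m1 m2 m3
      exact ⟨D, hD1, hD2, hD3⟩
end

section
/- Fix n ≥ 1 and set m = 4^n. Partition the edge set of G_{n,3} = C_m^{□3} (vertices (x,y,z) ∈ (ZMod m)³) into three classes X, Y, Z as follows: an edge {(x,y,z),(x+1,y,z)} lies in Z if x+y+z = -1 in ZMod m and in X otherwise; an edge {(x,y,z),(x,y+1,z)} lies in X if x+y+z = -1 and in Y otherwise; an edge {(x,y,z),(x,y,z+1)} lies in Y if x+y+z = -1 and in Z otherwise. Then each of the three classes, viewed as a spanning subgraph of G_{n,3}, is 2-regular, every connected component of each class is a cycle with exactly m² = 4^{2n} vertices, and each class has exactly m = 4^n connected components; hence this partition decomposes G_{n,3}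 into 3·4^n disjoint cycles of length 4^{2n}. -/
open SimpleGraph

/-- The coordinate sum `x + y + z` of a vertex of `(ZMod m)³`. -/
def sum3 {m : ℕ} (u : ZMod m × ZMod m × ZMod m) : ZMod m := u.1 + u.2.1 + u.2.2

/-- The edge class `X`: direction-1 edges whose lower endpoint has coordinate sum
`≠ -1`, together with direction-2 edges whose lower endpoint has coordinate sum `= -1`. -/
def classX (m : ℕ) : SimpleGraph (ZMod m × ZMod m × ZMod m) :=
  SimpleGraph.fromRel (fun u v =>
    (v = (u.1 + 1, u.2.1, u.2.2) ∧ sum3 u ≠ -1) ∨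
    (v = (u.1, u.2.1 + 1, u.2.2) ∧ sum3 u = -1))

/-- The edge class `Y`: direction-2 edges whose lower endpoint has coordinate sum
`≠ -1`, together with direction-3 edges whose lower endpoint has coordinate sum `= -1`. -/
def classY (m : ℕ) : SimpleGraph (ZMod m × ZMod m × ZMod m) :=
  SimpleGraph.fromRel (fun u v =>
    (v = (u.1, u.2.1 + 1, u.2.2) ∧ sum3 u ≠ -1) ∨
    (v = (u.1, u.2.1, u.2.2 + 1) ∧ sum3 u = -1))

/-- The edge class `Z`: direction-3 edges whose lower endpoint has coordinate sum
`≠ -1`, together with direction-1 edges whose lower endpoint has coordinate sum `= -1`. -/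
def classZ (m : ℕ) : SimpleGraph (ZMod m × ZMod m × ZMod m) :=
  SimpleGraph.fromRel (fun u v =>
    (v = (u.1, u.2.1, u.2.2 + 1) ∧ sum3 u ≠ -1) ∨
    (v = (u.1 + 1, u.2.1, u.2.2) ∧ sum3 u = -1))

/-!
Each class is the functional graph of a successor map: `succX` steps in direction 1, or in
direction 2 when the coordinate sum `s` equals `-1`. So `succX` raises `s` by one and carries into
`y` exactly when `s` wraps around: in the coordinates `(s, y, z)` it is the two-digit base-`m`
odometer on `(s, y)`, fixing `z`. Reading `(s, y)` as the number `s + m y` in `ZMod (m ^ 2)` turns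
`succX` into the shift `(k, z) ↦ (k + 1, z)`, whose functional graph consists of `m` disjoint
cycles of length `m ^ 2`. Rotating the coordinates conjugates `succY` and `succZ` to `succX`.

The classes are pairwise edge-disjoint because every successor map raises `s` by exactly one, and
they cover the torus because at each vertex the three successors are the three unit steps.
-/

lemma ZMod.natCast_ne_zero_of_pos_of_lt {k N : ℕ} (hk : 0 < k) (hkN : k < N) :
    (k : ZMod N) ≠ 0 := by
  rw [Ne, ZMod.natCast_eq_zero_iff]
  exact Nat.not_dvd_of_pos_of_lt hk hkN

namespace SimpleGraph

variable {V : Type*}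

def functionalGraph (f : V → V) : SimpleGraph V := fromRel fun u v => v = f u

lemma functionalGraph_adj {f : V → V} {u v : V} :
    (functionalGraph f).Adj u v ↔ u ≠ v ∧ (v = f u ∨ u = f v) :=
  fromRel_adj _ _ _

lemma fromRel_ite_eq_functionalGraph (p : V → Prop) [DecidablePred p] (a b : V → V) :
    fromRel (fun u v => (v = a u ∧ ¬p u) ∨ (v = b u ∧ p u)) =
      functionalGraph fun u => if p u then b u else a u := by
  unfold functionalGraph
  congr! 2 with u v
  by_cases h : p u <;> simp [h]

lemma disjoint_functionalGraph {R : Type*} [AddGroupWithOne R] {f g : V → V} (h : V → R)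
    (hf : ∀ v, h (f v) = h v + 1) (hg : ∀ v, h (g v) = h v + 1) (htwo : (2 : R) ≠ 0)
    (hfg : ∀ v, f v ≠ g v) : Disjoint (functionalGraph f) (functionalGraph g) := by
  have hcross {f g : V → V} (hf : ∀ v, h (f v) = h v + 1) (hg : ∀ v, h (g v) = h v + 1) v :
      f (g v) ≠ v := fun hv => htwo <| by
    simpa [hf, hg, add_assoc, one_add_one_eq_two] using congrArg h hv
  rw [disjoint_iff_inf_le]
  rintro u v ⟨⟨-, rfl | rfl⟩, -, hg' | hg'⟩
  · exact hfg u hg'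
  · exact hcross hg hf u hg'.symm
  · exact hcross hg hf v hg'.symm
  · exact hfg v hg'

section IterateWalk

variable {G : SimpleGraph V} {f : V → V} (hf : ∀ v, G.Adj v (f v))

def iterateWalk : (k : ℕ) → (v : V) → G.Walk v (f^[k] v)
  | 0, _ => .nil
  | k + 1, v => .cons (hf v) (iterateWalk k (f v))

@[simp]
lemma length_iterateWalk (k : ℕ) (v : V) : (iterateWalk hf k v).length = k := by
  induction k generalizing v with
  | zero => rfl
  | succ k ih => simp [iterateWalk, ih]

lemma support_iterateWalk (k : ℕ) (v : V) :
    (iterateWalk hf k v).support = List.iterate f v (k + 1) := by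
  induction k generalizing v with
  | zero => rfl
  | succ k ih => simp [iterateWalk, ih, List.iterate]

end IterateWalk

lemma functionalGraph_reachable_iterate {f : V → V} (k : ℕ) (v : V) :
    (functionalGraph f).Reachable v (f^[k] v) := by
  induction k with
  | zero => rfl
  | succ k ih =>
    refine ih.trans ?_
    rw [Function.iterate_succ_apply']
    by_cases h : f^[k] v = f (f^[k] v)
    · exact h ▸ Reachable.refl _
    · exact (functionalGraph_adj.2 ⟨h, .inl rfl⟩).reachable

def IsUnionOfCycles (G : SimpleGraph V) (N k : ℕ) : Prop :=
  (∀ v, (G.neighborSet v).ncard = 2) ∧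
  (∀ v, ∃ w : G.Walk v v, w.IsCycle ∧ w.length = N ∧
    ∀ u, u ∈ w.support ↔ G.Reachable v u) ∧
  Nat.card G.ConnectedComponent = k

section ShiftConjugate

variable {ι : Type*} {f : V → V} {N : ℕ} {θ : V ≃ ZMod N × ι}
  (hθ : ∀ v, θ (f v) = ((θ v).1 + 1, (θ v).2))
include hθ

lemma apply_iterate_of_shift (k : ℕ) (v : V) : θ (f^[k] v) = ((θ v).1 + k, (θ v).2) := by
  induction k with
  | zero => simp
  | succ k ih => simp [Function.iterate_succ_apply', hθ, ih, add_assoc]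

lemma exists_iterate_eq_iff_of_shift [NeZero N] {u v : V} :
    (∃ k < N, u = f^[k] v) ↔ (θ u).2 = (θ v).2 := by
  constructor
  · rintro ⟨k, -, rfl⟩
    simp [apply_iterate_of_shift hθ]
  · intro h
    refine ⟨((θ u).1 - (θ v).1).val, ZMod.val_lt _, θ.injective ?_⟩
    rw [apply_iterate_of_shift hθ, ZMod.natCast_zmod_val, add_sub_cancel, ← h]

lemma iterate_injOn_of_shift [NeZero N] (v : V) : Set.InjOn (f^[·] v) (Set.Iio N) := by
  intro k hk l hl hkl
  have hkl' : (k : ZMod N) = l := by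
    simpa [apply_iterate_of_shift hθ] using congrArg (fun w => (θ w).1) hkl
  simpa [ZMod.val_cast_of_lt hk, ZMod.val_cast_of_lt hl] using congrArg ZMod.val hkl'

lemma iterate_period_of_shift (v : V) : f^[N] v = v :=
  θ.injective <| by simp [apply_iterate_of_shift hθ]

lemma apply_ne_of_shift (hN : 2 ≤ N) (v : V) : f v ≠ v := by
  have : Fact (1 < N) := ⟨hN⟩
  intro hv
  simpa [hθ] using congrArg (fun w => (θ w).1) hv

lemma reachable_iff_of_shift [NeZero N] {u v : V} :
    (functionalGraph f).Reachable v u ↔ (θ u).2 = (θ v).2 := by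
  constructor
  · rintro ⟨p⟩
    induction p with
    | nil => rfl
    | cons hadj _ ih =>
      obtain ⟨-, rfl | rfl⟩ := functionalGraph_adj.1 hadj <;> simp [hθ, ih]
  · rw [← exists_iterate_eq_iff_of_shift hθ]
    rintro ⟨k, -, rfl⟩
    exact functionalGraph_reachable_iterate k v

lemma exists_isCycle_of_shift (hN : 3 ≤ N) (v : V) :
    ∃ w : (functionalGraph f).Walk v v, w.IsCycle ∧ w.length = N ∧
      ∀ u, u ∈ w.support ↔ (θ u).2 = (θ v).2 := by
  have : NeZero N := ⟨by omega⟩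
  have hf (v : V) : (functionalGraph f).Adj v (f v) :=
    functionalGraph_adj.2 ⟨(apply_ne_of_shift hθ (by omega) v).symm, .inl rfl⟩
  have hN' : N - 1 + 1 = N := by omega
  have hend : f^[N - 1] (f v) = v := by
    rw [← Function.iterate_succ_apply, Nat.succ_eq_add_one, hN', iterate_period_of_shift hθ]
  let q := (iterateWalk hf (N - 1) (f v)).copy rfl hend
  have hq : q.support = List.iterate f (f v) N := by
    rw [← hN']
    simp [q, support_iterateWalk, List.iterate]
  refine ⟨.cons (hf v) q, ?_, by simp [q]; omega, fun u => ?_⟩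
  · rw [Walk.isCycle_iff_isPath_tail_and_le_length]
    refine ⟨?_, by simp [q]; omega⟩
    have hqp : q.IsPath := by
      rw [Walk.isPath_def, hq, ← List.range_map_iterate]
      exact List.Nodup.map_on (fun k hk l hl => iterate_injOn_of_shift hθ (f v)
        (List.mem_range.1 hk) (List.mem_range.1 hl)) List.nodup_range
    simpa using hqp
  · rw [Walk.support_cons, List.mem_cons, hq, List.mem_iterate,
      exists_iterate_eq_iff_of_shift hθ, hθ]
    exact or_iff_right_of_imp fun h => h ▸ rfl

lemma ncard_neighborSet_of_shift (hN : 3 ≤ N) (v : V) :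
    ((functionalGraph f).neighborSet v).ncard = 2 := by
  set w := θ.symm ((θ v).1 - 1, (θ v).2)
  have hw (u : V) : v = f u ↔ u = w := by
    rw [← θ.apply_eq_iff_eq, hθ, Equiv.eq_symm_apply, Prod.ext_iff, Prod.ext_iff,
      eq_sub_iff_add_eq]
    tauto
  have hfw : f v ≠ w := by
    have h2 : (2 : ZMod N) ≠ 0 := by exact_mod_cast ZMod.natCast_ne_zero_of_pos_of_lt two_pos hN
    intro h
    have := congrArg (fun x => (θ x).1) h
    simp only [hθ, w, Equiv.apply_symm_apply] at this
    exact h2 (by linear_combination this)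
  have : (functionalGraph f).neighborSet v = {f v, w} := by
    ext u
    simp only [mem_neighborSet, functionalGraph_adj, hw, Set.mem_insert_iff, Set.mem_singleton_iff]
    refine ⟨fun h => h.2, fun h => ⟨?_, h⟩⟩
    rintro rfl
    exact apply_ne_of_shift hθ (by omega) v (h.elim id (hw v).2).symm
  rw [this, Set.ncard_pair hfw]

lemma card_connectedComponent_of_shift [NeZero N] :
    Nat.card (functionalGraph f).ConnectedComponent = Nat.card ι := by
  refine Nat.card_congr (.ofBijective (ConnectedComponent.lift (fun v => (θ v).2)
    fun v w p _ => ((reachable_iff_of_shift hθ).1 p.reachable).symm) ⟨?_, fun i => ?_⟩)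
  · rintro ⟨v⟩ ⟨w⟩ h
    exact ConnectedComponent.sound ((reachable_iff_of_shift hθ).2 h.symm)
  · exact ⟨connectedComponentMk _ (θ.symm (0, i)), by simp⟩

theorem isUnionOfCycles_of_shift (hN : 3 ≤ N) :
    (functionalGraph f).IsUnionOfCycles N (Nat.card ι) := by
  have : NeZero N := ⟨by omega⟩
  refine ⟨ncard_neighborSet_of_shift hθ hN, fun v => ?_, card_connectedComponent_of_shift hθ⟩
  obtain ⟨w, hw, hlen, hsupp⟩ := exists_isCycle_of_shift hθ hN v
  exact ⟨w, hw, hlen, fun u => (hsupp u).trans (reachable_iff_of_shift hθ).symm⟩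

end ShiftConjugate

end SimpleGraph

section TwoDigit

variable {m : ℕ}

def twoDigit (p : ZMod m × ZMod m) : ZMod (m ^ 2) := (p.1.val + m * p.2.val : ℕ)

lemma twoDigit_injective [NeZero m] : Function.Injective (twoDigit (m := m)) := by
  rintro ⟨a, b⟩ ⟨a', b'⟩ h
  have hm : 0 < m := NeZero.pos m
  have hlt (a b : ZMod m) : a.val + m * b.val < m ^ 2 := by nlinarith [a.val_lt, b.val_lt]
  have h' : a.val + m * b.val = a'.val + m * b'.val := by
    have := congrArg ZMod.val h
    rwa [twoDigit, twoDigit, ZMod.val_cast_of_lt (hlt _ _), ZMod.val_cast_of_lt (hlt _ _)] at this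
  have ha : a.val = a'.val := by
    simpa [Nat.add_mul_mod_self_left, Nat.mod_eq_of_lt a.val_lt, Nat.mod_eq_of_lt a'.val_lt]
      using congrArg (· % m) h'
  have hb : b.val = b'.val := by
    simpa [Nat.add_mul_div_left _ _ hm, Nat.div_eq_of_lt a.val_lt, Nat.div_eq_of_lt a'.val_lt]
      using congrArg (· / m) h'
  simp [ZMod.val_injective _ ha, ZMod.val_injective _ hb]

noncomputable def twoDigitEquiv [NeZero m] : ZMod m × ZMod m ≃ ZMod (m ^ 2) :=
  .ofBijective twoDigit <| (Fintype.bijective_iff_injective_and_card _).2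
    ⟨twoDigit_injective, by simp [ZMod.card, sq]⟩

lemma ZMod.val_add_one_eq_iff [NeZero m] (a : ZMod m) : a.val + 1 = m ↔ a = -1 := by
  rw [← add_eq_zero_iff_eq_neg, ← ZMod.natCast_zmod_val a, ← Nat.cast_add_one,
    ZMod.natCast_eq_zero_iff, ZMod.natCast_zmod_val a]
  have := a.val_lt
  exact ⟨fun h => by rw [h], fun h => Nat.le_antisymm (by omega) (Nat.le_of_dvd (by omega) h)⟩

lemma twoDigit_add_one [Fact (1 < m)] (a b : ZMod m) :
    twoDigit (a + 1, b + if a = -1 then 1 else 0) = twoDigit (a, b) + 1 := by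
  by_cases ha : a = -1
  · have hv := (ZMod.val_add_one_eq_iff a).2 ha
    have h0 : a + 1 = 0 := by rw [ha, neg_add_cancel]
    have hcarry : ((a.val + m * b.val : ℕ) : ZMod (m ^ 2)) + 1 = (m * (b.val + 1) : ℕ) := by
      rw [← Nat.cast_add_one, mul_add, mul_one]
      congr 1
      omega
    -- `m * x` modulo `m ^ 2` only depends on `x` modulo `m`
    rw [if_pos ha, h0, twoDigit, twoDigit, ZMod.val_zero, zero_add, hcarry,
      ZMod.natCast_eq_natCast_iff', sq, Nat.mul_mod_mul_left, Nat.mul_mod_mul_left, ZMod.val_add,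
      ZMod.val_one, Nat.mod_mod]
  · have hv : a.val + 1 < m := lt_of_le_of_ne a.val_lt (mt (ZMod.val_add_one_eq_iff a).1 ha)
    rw [if_neg ha, add_zero, twoDigit, twoDigit, ZMod.val_add_of_lt (by rwa [ZMod.val_one]),
      ZMod.val_one]
    push_cast
    ring

end TwoDigit

section Classes

variable {m : ℕ}

def succX (u : ZMod m × ZMod m × ZMod m) : ZMod m × ZMod m × ZMod m :=
  if sum3 u = -1 then (u.1, u.2.1 + 1, u.2.2) else (u.1 + 1, u.2.1, u.2.2)

def succY (u : ZMod m × ZMod m × ZMod m) : ZMod m × ZMod m × ZMod m :=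
  if sum3 u = -1 then (u.1, u.2.1, u.2.2 + 1) else (u.1, u.2.1 + 1, u.2.2)

def succZ (u : ZMod m × ZMod m × ZMod m) : ZMod m × ZMod m × ZMod m :=
  if sum3 u = -1 then (u.1 + 1, u.2.1, u.2.2) else (u.1, u.2.1, u.2.2 + 1)

lemma classX_eq_functionalGraph : classX m = functionalGraph succX :=
  fromRel_ite_eq_functionalGraph _ _ _

lemma classY_eq_functionalGraph : classY m = functionalGraph succY :=
  fromRel_ite_eq_functionalGraph _ _ _

lemma classZ_eq_functionalGraph : classZ m = functionalGraph succZ :=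
  fromRel_ite_eq_functionalGraph _ _ _

lemma sum3_succX (u : ZMod m × ZMod m × ZMod m) : sum3 (succX u) = sum3 u + 1 := by
  unfold succX; split_ifs <;> simp only [sum3] <;> ring

lemma sum3_succY (u : ZMod m × ZMod m × ZMod m) : sum3 (succY u) = sum3 u + 1 := by
  unfold succY; split_ifs <;> simp only [sum3] <;> ring

lemma sum3_succZ (u : ZMod m × ZMod m × ZMod m) : sum3 (succZ u) = sum3 u + 1 := by
  unfold succZ; split_ifs <;> simp only [sum3] <;> ring

section

variable [Fact (1 < m)] (u : ZMod m × ZMod m × ZMod m)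

lemma succX_ne_succY : succX u ≠ succY u := by
  unfold succX succY; split_ifs <;> simp

lemma succX_ne_succZ : succX u ≠ succZ u := by
  unfold succX succZ; split_ifs <;> simp

lemma succY_ne_succZ : succY u ≠ succZ u := by
  unfold succY succZ; split_ifs <;> simp

end

lemma sup_classXYZ_eq_boxProd :
    classX m ⊔ classY m ⊔ classZ m = (cycGraph m □ (cycGraph m □ cycGraph m)) := by
  ext ⟨x, y, z⟩ ⟨x', y', z'⟩
  simp only [sup_adj, classX, classY, classZ, fromRel_adj, boxProd_adj, cycGraph, sum3,
    Prod.ext_iff, sub_eq_iff_eq_add, ne_eq]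
  grind

lemma disjoint_classX_classY (hm : 2 < m) : Disjoint (classX m) (classY m) := by
  have : Fact (1 < m) := ⟨by omega⟩
  rw [classX_eq_functionalGraph, classY_eq_functionalGraph]
  exact disjoint_functionalGraph sum3 sum3_succX sum3_succY
    (by exact_mod_cast ZMod.natCast_ne_zero_of_pos_of_lt two_pos hm) succX_ne_succY

lemma disjoint_classX_classZ (hm : 2 < m) : Disjoint (classX m) (classZ m) := by
  have : Fact (1 < m) := ⟨by omega⟩
  rw [classX_eq_functionalGraph, classZ_eq_functionalGraph]
  exact disjoint_functionalGraph sum3 sum3_succX sum3_succZ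
    (by exact_mod_cast ZMod.natCast_ne_zero_of_pos_of_lt two_pos hm) succX_ne_succZ

lemma disjoint_classY_classZ (hm : 2 < m) : Disjoint (classY m) (classZ m) := by
  have : Fact (1 < m) := ⟨by omega⟩
  rw [classY_eq_functionalGraph, classZ_eq_functionalGraph]
  exact disjoint_functionalGraph sum3 sum3_succY sum3_succZ
    (by exact_mod_cast ZMod.natCast_ne_zero_of_pos_of_lt two_pos hm) succY_ne_succZ

def sumCoords : (ZMod m × ZMod m × ZMod m) ≃ (ZMod m × ZMod m) × ZMod m where
  toFun u := ((sum3 u, u.2.1), u.2.2)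
  invFun p := (p.1.1 - p.1.2 - p.2, p.1.2, p.2)
  left_inv u := Prod.ext (by simp only [sum3]; ring) rfl
  right_inv p := Prod.ext (Prod.ext (by simp only [sum3]; ring) rfl) rfl

noncomputable def shiftCoordsX [NeZero m] :
    (ZMod m × ZMod m × ZMod m) ≃ ZMod (m ^ 2) × ZMod m :=
  sumCoords.trans (twoDigitEquiv.prodCongr (Equiv.refl _))

lemma shiftCoordsX_succX [Fact (1 < m)] (u : ZMod m × ZMod m × ZMod m) :
    shiftCoordsX (succX u) = ((shiftCoordsX u).1 + 1, (shiftCoordsX u).2) := by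
  have hcarry : (succX u).2.1 = u.2.1 + if sum3 u = -1 then 1 else 0 := by
    unfold succX; split_ifs <;> simp
  have hfixed : (succX u).2.2 = u.2.2 := by
    unfold succX; split_ifs <;> rfl
  change (twoDigit (sum3 (succX u), (succX u).2.1), (succX u).2.2) =
    (twoDigit (sum3 u, u.2.1) + 1, u.2.2)
  rw [sum3_succX, hcarry, hfixed, twoDigit_add_one]

def rotateCoords : Equiv.Perm (ZMod m × ZMod m × ZMod m) :=
  (Equiv.prodComm _ _).trans (Equiv.prodAssoc _ _ _)

lemma sum3_rotateCoords (u : ZMod m × ZMod m × ZMod m) : sum3 (rotateCoords u) = sum3 u := by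
  change u.2.1 + u.2.2 + u.1 = u.1 + u.2.1 + u.2.2
  ring

lemma semiconj_rotateCoords_succY : Function.Semiconj (rotateCoords (m := m)) succY succX := by
  intro u
  unfold succX succY
  rw [sum3_rotateCoords]
  split_ifs <;> rfl

lemma semiconj_rotateCoords_succZ : Function.Semiconj (rotateCoords (m := m)) succZ succY := by
  intro u
  unfold succY succZ
  rw [sum3_rotateCoords]
  split_ifs <;> rfl

lemma isUnionOfCycles_of_semiconj_succX (hm : 2 < m)
    {g : ZMod m × ZMod m × ZMod m → ZMod m × ZMod m × ZMod m}
    (σ : Equiv.Perm (ZMod m × ZMod m × ZMod m)) (hσ : Function.Semiconj σ g succX) :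
    (functionalGraph g).IsUnionOfCycles (m ^ 2) m := by
  have : Fact (1 < m) := ⟨by omega⟩
  have := isUnionOfCycles_of_shift (f := g) (θ := σ.trans shiftCoordsX)
    (fun u => by simp only [Equiv.trans_apply, hσ u, shiftCoordsX_succX]) (by nlinarith)
  rwa [Nat.card_zmod] at this

theorem isUnionOfCycles_classXYZ (hm : 2 < m) :
    ∀ A ∈ [classX m, classY m, classZ m], A.IsUnionOfCycles (m ^ 2) m := by
  simp only [List.mem_cons, List.not_mem_nil, or_false]
  rintro A (rfl | rfl | rfl)
  · rw [classX_eq_functionalGraph]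
    exact isUnionOfCycles_of_semiconj_succX hm (Equiv.refl _) fun _ => rfl
  · rw [classY_eq_functionalGraph]
    exact isUnionOfCycles_of_semiconj_succX hm rotateCoords semiconj_rotateCoords_succY
  · rw [classZ_eq_functionalGraph]
    exact isUnionOfCycles_of_semiconj_succX hm (rotateCoords * rotateCoords)
      (semiconj_rotateCoords_succY.comp_left semiconj_rotateCoords_succZ)

end Classes

/-- For `m = 4^n` (`n ≥ 1`), the classes `X, Y, Z` partition the edge set of
`G_{n,3} = C_m □ C_m □ C_m`; each class is 2-regular, each connected component of each
class is a cycle with exactly `4^{2n}` vertices, and each class has exactly `4^n`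
connected components; hence `G_{n,3}` decomposes into `3·4^n` cycles of length `4^{2n}`. -/
theorem classXYZ_decomposition (n : ℕ) (hn : 1 ≤ n) :
    ((classX (4 ^ n)).edgeSet ∪ (classY (4 ^ n)).edgeSet ∪ (classZ (4 ^ n)).edgeSet
      = (cycGraph (4 ^ n) □ (cycGraph (4 ^ n) □ cycGraph (4 ^ n))).edgeSet) ∧
    Disjoint (classX (4 ^ n)).edgeSet (classY (4 ^ n)).edgeSet ∧
    Disjoint (classX (4 ^ n)).edgeSet (classZ (4 ^ n)).edgeSet ∧
    Disjoint (classY (4 ^ n)).edgeSet (classZ (4 ^ n)).edgeSet ∧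
    (∀ A ∈ [classX (4 ^ n), classY (4 ^ n), classZ (4 ^ n)],
      (∀ v, (A.neighborSet v).ncard = 2) ∧
      (∀ v, ∃ w : A.Walk v v, w.IsCycle ∧ w.length = 4 ^ (2 * n) ∧
        ∀ u, u ∈ w.support ↔ A.Reachable v u) ∧
      Nat.card A.ConnectedComponent = 4 ^ n) := by
  have hm : 2 < 4 ^ n := lt_of_lt_of_le (by norm_num) (Nat.pow_le_pow_right (by norm_num) hn)
  rw [← edgeSet_sup, ← edgeSet_sup, sup_classXYZ_eq_boxProd, disjoint_edgeSet, disjoint_edgeSet,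
    disjoint_edgeSet, pow_mul']
  exact ⟨rfl, disjoint_classX_classY hm, disjoint_classX_classZ hm, disjoint_classY_classZ hm,
    isUnionOfCycles_classXYZ hm⟩
end

section
/- Let m ≥ 4 and let S ⊆ (ZMod m)³ be a set such that every (x₁,x₂,x₃) ∈ S satisfies x₁+x₂+x₃ = -1 in ZMod m, and any two distinct members (x₁,x₂,x₃), (x₁',x₂',x₃') of S satisfy x₁ ≠ x₁', x₂ ≠ x₂', and x₃ ≠ x₃'. Then for any two distinct s, s' ∈ S the translated combinatorial cubes s + {0,1}³ and s' + {0,1}³ (Minkowski sums, where {0,1}³ is viewed inside (ZMod m)³) are disjoint subsets of (ZMod m)³. -/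
open SimpleGraph

/-- The combinatorial cube `{0,1}³` inside `(ZMod m)³`. -/
def unitCube (m : ℕ) : Set (ZMod m × ZMod m × ZMod m) :=
  {p | (p.1 = 0 ∨ p.1 = 1) ∧ (p.2.1 = 0 ∨ p.2.1 = 1) ∧ (p.2.2 = 0 ∨ p.2.2 = 1)}

/-- If every member of `S ⊆ (ZMod m)³` (`m ≥ 4`) has coordinate sum `-1` and distinct
members of `S` differ in all three coordinates, then the translated cubes `s + {0,1}³`
for `s ∈ S` are pairwise disjoint. -/
theorem merging_set_cubes_disjoint (m : ℕ) (hm : 4 ≤ m)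
    (S : Set (ZMod m × ZMod m × ZMod m))
    (hsum : ∀ s ∈ S, s.1 + s.2.1 + s.2.2 = -1)
    (hdist : ∀ s ∈ S, ∀ s' ∈ S, s ≠ s' →
      s.1 ≠ s'.1 ∧ s.2.1 ≠ s'.2.1 ∧ s.2.2 ≠ s'.2.2) :
    ∀ s ∈ S, ∀ s' ∈ S, s ≠ s' →
      Disjoint ((fun i => s + i) '' unitCube m) ((fun i => s' + i) '' unitCube m) := by
  intro s hs s' hs' hne
  have h1 : (1 : ZMod m) ≠ 0 := by
    intro h
    have := (ZMod.natCast_eq_zero_iff 1 m).mp (by exact_mod_cast h)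
    have := Nat.le_of_dvd (by norm_num) this
    omega
  have h3 : (3 : ZMod m) ≠ 0 := by
    intro h
    have := (ZMod.natCast_eq_zero_iff 3 m).mp (by exact_mod_cast h)
    have := Nat.le_of_dvd (by norm_num) this
    omega
  have key : ∀ a b : ZMod m, (a = 0 ∨ a = 1) → (b = 0 ∨ b = 1) → a ≠ b →
      a - b = 1 ∨ a - b = -1 := by
    rintro a b (rfl|rfl) (rfl|rfl) hab
    · exact absurd rfl hab
    · right; ring
    · left; ring
    · exact absurd rfl hab
  rw [Set.disjoint_left]
  rintro x ⟨i, hi, rfl⟩ ⟨i', hi', heq⟩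
  obtain ⟨hd1, hd2, hd3⟩ := hdist s hs s' hs' hne
  have e1 : s.1 + i.1 = s'.1 + i'.1 := congrArg Prod.fst heq.symm
  have e2 : s.2.1 + i.2.1 = s'.2.1 + i'.2.1 := congrArg (Prod.fst ∘ Prod.snd) heq.symm
  have e3 : s.2.2 + i.2.2 = s'.2.2 + i'.2.2 := congrArg (Prod.snd ∘ Prod.snd) heq.symm
  have ne1 : i.1 ≠ i'.1 := fun h => hd1 (by rw [h] at e1; exact add_right_cancel e1)
  have ne2 : i.2.1 ≠ i'.2.1 := fun h => hd2 (by rw [h] at e2; exact add_right_cancel e2)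
  have ne3 : i.2.2 ≠ i'.2.2 := fun h => hd3 (by rw [h] at e3; exact add_right_cancel e3)
  have d1 := key i.1 i'.1 hi.1 hi'.1 ne1
  have d2 := key i.2.1 i'.2.1 hi.2.1 hi'.2.1 ne2
  have d3 := key i.2.2 i'.2.2 hi.2.2 hi'.2.2 ne3
  have hsumEq : (i.1 - i'.1) + (i.2.1 - i'.2.1) + (i.2.2 - i'.2.2) = 0 := by
    have hs1 := hsum s hs
    have hs2 := hsum s' hs'
    have : (s.1 + i.1 + (s.2.1 + i.2.1) + (s.2.2 + i.2.2))
        = (s'.1 + i'.1 + (s'.2.1 + i'.2.1) + (s'.2.2 + i'.2.2)) := by rw [e1, e2, e3]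
    linear_combination this - hs1 + hs2
  rcases d1 with d1|d1 <;> rcases d2 with d2|d2 <;> rcases d3 with d3|d3 <;>
    rw [d1, d2, d3] at hsumEq
  · exact h3 (by linear_combination hsumEq)
  · exact h1 (by linear_combination hsumEq)
  · exact h1 (by linear_combination hsumEq)
  · exact h1 (by linear_combination -hsumEq)
  · exact h1 (by linear_combination hsumEq)
  · exact h1 (by linear_combination -hsumEq)
  · exact h1 (by linear_combination -hsumEq)
  · exact h3 (by linear_combination -hsumEq)
end

section
/- Let G be a simple graph with exactly N vertices, N ≥ 3. If E_1 and E_2 are edge-disjoint Hamiltonian cycles of G, and H_1 and H_2 are edge-disjoint Hamiltonian cycles of C_N □ C_N □ C_N, then the four Hamiltonian cycles g(E_1,H_1), g(E_1,H_2), g(E_2,H_1), g(E_2,H_2) of G □ G □ G are pairwise edge-disjoint. -/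
open SimpleGraph

/-- If `E₁, E₂` are edge-disjoint Hamiltonian cycles of a graph `G` with `N ≥ 3`
vertices, and `H₁, H₂` are edge-disjoint Hamiltonian cycles of `C_N □ C_N □ C_N`, then
the four Hamiltonian cycles `g(Eᵢ, Hⱼ)` of `G □ G □ G` are pairwise edge-disjoint.
Here `g(Eᵢ, Hⱼ)` is the image of `Hⱼ` under `ψᵢ : (a,b,c) ↦ (φᵢ a, φᵢ b, φᵢ c)`,
where `φᵢ` enumerates the vertices of `G` along `Eᵢ`. -/
theorem g_pairwise_edge_disjoint {V : Type*} [Fintype V] [DecidableEq V]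
    (G : SimpleGraph V) (N : ℕ) (hN : 3 ≤ N) (hcard : Fintype.card V = N)
    (E : Fin 2 → Σ v, G.Walk v v) (hE : ∀ i, (E i).2.IsHamiltonianCycle)
    (hEdisj : ∀ e, e ∈ (E 0).2.edges → e ∉ (E 1).2.edges)
    (φ : Fin 2 → ZMod N → V) (hbij : ∀ i, Function.Bijective (φ i))
    (hφE : ∀ i (a : ZMod N), s(φ i a, φ i (a + 1)) ∈ (E i).2.edges)
    (H : Fin 2 → Σ p, (cycGraph N □ (cycGraph N □ cycGraph N)).Walk p p)
    (hH : ∀ j, (H j).2.IsHamiltonianCycle)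
    (hHdisj : ∀ e, e ∈ (H 0).2.edges → e ∉ (H 1).2.edges)
    (ψ : Fin 2 → ((cycGraph N □ (cycGraph N □ cycGraph N)) →g (G □ (G □ G))))
    (hψ : ∀ i (p : ZMod N × ZMod N × ZMod N), ψ i p = (φ i p.1, φ i p.2.1, φ i p.2.2)) :
    ∀ i j i' j' : Fin 2, (i, j) ≠ (i', j') →
      ∀ e, e ∈ ((H j).2.map (ψ i)).edges → e ∉ ((H j').2.map (ψ i')).edges := by
  have hinj : ∀ i, Function.Injective (φ i) := fun i => (hbij i).injective
  have hψinj : ∀ i, Function.Injective (ψ i) := by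
    intro i x y h
    rw [hψ, hψ] at h
    simp only [Prod.mk.injEq] at h
    obtain ⟨h1, h2, h3⟩ := h
    exact Prod.ext (hinj i h1) (Prod.ext (hinj i h2) (hinj i h3))
  have hedge : ∀ (i : Fin 2) (u v : ZMod N), (cycGraph N).Adj u v →
      s(φ i u, φ i v) ∈ (E i).2.edges := by
    intro i u v hadj
    obtain ⟨-, h1 | h1⟩ := (SimpleGraph.fromRel_adj _ u v).mp hadj
    · have hu : u = v + 1 := by linear_combination h1
      rw [hu, Sym2.eq_swap]; exact hφE i v
    · have hv : v = u + 1 := by linear_combination h1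
      rw [hv]; exact hφE i u
  have hkey : ∀ (i i' : Fin 2) (p q p' q' : ZMod N × ZMod N × ZMod N),
      (cycGraph N □ (cycGraph N □ cycGraph N)).Adj p q →
      (cycGraph N □ (cycGraph N □ cycGraph N)).Adj p' q' →
      ψ i p = ψ i' p' → ψ i q = ψ i' q' →
      ∃ f, f ∈ (E i).2.edges ∧ f ∈ (E i').2.edges := by
    intro i i' p q p' q' hpq hp'q' h1 h2
    rw [hψ i p, hψ i' p'] at h1
    rw [hψ i q, hψ i' q'] at h2
    simp only [Prod.mk.injEq] at h1 h2
    obtain ⟨e11, e12, e13⟩ := h1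
    obtain ⟨e21, e22, e23⟩ := h2
    simp only [boxProd_adj] at hpq hp'q'
    rcases hpq with ⟨ha, hb⟩ | ⟨⟨ha, hb⟩ | ⟨ha, hb⟩, hc⟩ <;>
      rcases hp'q' with ⟨ha', hb'⟩ | ⟨⟨ha', hb'⟩ | ⟨ha', hb'⟩, hc'⟩
    -- c = 1, c' = 1 : matched
    · refine ⟨s(φ i p.1, φ i q.1), hedge i _ _ ha, ?_⟩
      rw [e11, e21]; exact hedge i' _ _ ha'
    -- c = 1, c' = 2
    · exact absurd (hinj i (e11.trans (by rw [hc']; exact e21.symm))) ha.ne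
    -- c = 1, c' = 3
    · exact absurd (hinj i (e11.trans (by rw [hc']; exact e21.symm))) ha.ne
    -- c = 2, c' = 1
    · exact absurd (hinj i (e12.trans (by rw [congrArg Prod.fst hb']; exact e22.symm))) ha.ne
    -- c = 2, c' = 2 : matched
    · refine ⟨s(φ i p.2.1, φ i q.2.1), hedge i _ _ ha, ?_⟩
      rw [e12, e22]; exact hedge i' _ _ ha'
    -- c = 2, c' = 3
    · exact absurd (hinj i (e12.trans (by rw [hb']; exact e22.symm))) ha.ne
    -- c = 3, c' = 1
    · exact absurd (hinj i (e13.trans (by rw [congrArg Prod.snd hb']; exact e23.symm))) ha.ne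
    -- c = 3, c' = 2
    · exact absurd (hinj i (e13.trans (by rw [hb']; exact e23.symm))) ha.ne
    -- c = 3, c' = 3 : matched
    · refine ⟨s(φ i p.2.2, φ i q.2.2), hedge i _ _ ha, ?_⟩
      rw [e13, e23]; exact hedge i' _ _ ha'
  intro i j i' j' hne e he he'
  rw [Walk.edges_map, List.mem_map] at he he'
  obtain ⟨e1, he1, rfl⟩ := he
  obtain ⟨e2, he2, heq⟩ := he'
  by_cases hii : i = i'
  · subst hii
    have hjj : j ≠ j' := fun h => hne (by rw [h])
    have he2e1 : e2 = e1 := Sym2.map.injective (hψinj i) heq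
    subst he2e1
    fin_cases j <;> fin_cases j' <;>
      first
        | exact hjj rfl
        | exact hHdisj _ he1 he2
        | exact hHdisj _ he2 he1
  · revert he1 heq
    induction e1 using Sym2.ind with
    | _ p q =>
      revert he2
      induction e2 using Sym2.ind with
      | _ p' q' =>
        intro he2 he1 heq
        have hadj1 : (cycGraph N □ (cycGraph N □ cycGraph N)).Adj p q :=
          Walk.adj_of_mem_edges _ he1
        have hadj2 : (cycGraph N □ (cycGraph N □ cycGraph N)).Adj p' q' :=
          Walk.adj_of_mem_edges _ he2
        rw [Sym2.map_pair_eq, Sym2.map_pair_eq, Sym2.eq_iff] at heq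
        have hcomm : ∃ f, f ∈ (E i').2.edges ∧ f ∈ (E i).2.edges := by
          rcases heq with ⟨u1, u2⟩ | ⟨u1, u2⟩
          · exact hkey i' i p' q' p q hadj2 hadj1 u1 u2
          · exact hkey i' i p' q' q p hadj2 hadj1.symm u1 u2
        obtain ⟨f, hf1, hf2⟩ := hcomm
        fin_cases i <;> fin_cases i' <;>
          first
            | exact hii rfl
            | exact hEdisj f hf2 hf1
            | exact hEdisj f hf1 hf2
end

section
/- For every n ≥ 1, setting m = 4^n, there exists a Hamiltonian cycle H of C_m^{□2} such that H and τ(H) are edge-disjoint and their edge sets together cover every edge of C_m^{□2}, where τ is the automorphism of C_m^{□2} swapping the two coordinates; i.e., G_{n,2} has a Latin Hamilton decomposition {H, τ(H)} with source cycle H and Latin family (id, τ). -/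
open SimpleGraph

namespace G2HamAux

open SimpleGraph

variable {m : ℕ}

/-- One step of the source Hamiltonian cycle: move in direction `x` when the
coordinate sum is `0`, otherwise move in direction `y`. -/
def nxt (m : ℕ) (v : Fin 2 → ZMod m) : Fin 2 → ZMod m :=
  if v 0 + v 1 = 0 then ![v 0 + 1, v 1] else ![v 0, v 1 + 1]

/-- One step of the transposed Hamiltonian cycle. -/
def nxt' (m : ℕ) (v : Fin 2 → ZMod m) : Fin 2 → ZMod m :=
  if v 0 + v 1 = 0 then ![v 0, v 1 + 1] else ![v 0 + 1, v 1]

lemma one_ne (hm : 4 ≤ m) : (1 : ZMod m) ≠ 0 := by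
  haveI : NeZero m := ⟨by omega⟩
  have : ((1 : ℕ) : ZMod m) ≠ 0 := by
    rw [Ne, ZMod.natCast_eq_zero_iff]
    intro h
    have := Nat.le_of_dvd one_pos h
    omega
  simpa using this

lemma two_ne (hm : 4 ≤ m) : (2 : ZMod m) ≠ 0 := by
  haveI : NeZero m := ⟨by omega⟩
  have : ((2 : ℕ) : ZMod m) ≠ 0 := by
    rw [Ne, ZMod.natCast_eq_zero_iff]
    intro h
    have := Nat.le_of_dvd (by norm_num) h
    omega
  simpa using this

lemma cast_ne (hm : 4 ≤ m) {r : ℕ} (h1 : 1 ≤ r) (h2 : r < m) : (r : ZMod m) ≠ 0 := by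
  haveI : NeZero m := ⟨by omega⟩
  rw [Ne, ZMod.natCast_eq_zero_iff]
  intro h
  have := Nat.le_of_dvd (by omega) h
  omega

lemma adj_nxt (hm : 4 ≤ m) (v : Fin 2 → ZMod m) : (torusGraph m 2).Adj v (nxt m v) := by
  unfold nxt
  split_ifs with h
  · refine ⟨0, ⟨?_, Or.inr ?_⟩, ?_⟩
    · simp only [Matrix.cons_val_zero]
      intro hh
      exact one_ne hm (by linear_combination -hh)
    · simp only [Matrix.cons_val_zero]; ring
    · intro j hj
      fin_cases j
      · exact absurd rfl hj
      · simp
  · refine ⟨1, ⟨?_, Or.inr ?_⟩, ?_⟩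
    · simp only [Matrix.cons_val_one, Matrix.head_cons, Matrix.cons_val_zero]
      intro hh
      exact one_ne hm (by linear_combination -hh)
    · simp only [Matrix.cons_val_one, Matrix.head_cons, Matrix.cons_val_zero]; ring
    · intro j hj
      fin_cases j
      · simp
      · exact absurd rfl hj

def pos (m : ℕ) : ℕ → (Fin 2 → ZMod m)
  | 0 => ![0, 0]
  | t + 1 => nxt m (pos m t)

lemma pos_succ (t : ℕ) : pos m (t + 1) = nxt m (pos m t) := rfl

lemma nxt_sum (v : Fin 2 → ZMod m) : (nxt m v) 0 + (nxt m v) 1 = v 0 + v 1 + 1 := by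
  unfold nxt
  split_ifs with h <;> simp <;> ring

lemma pos_sum (t : ℕ) : pos m t 0 + pos m t 1 = (t : ZMod m) := by
  induction t with
  | zero => simp [pos]
  | succ t ih => rw [pos_succ, nxt_sum, ih]; push_cast; ring

end G2HamAux
namespace G2HamAux

open SimpleGraph

variable {m : ℕ}

lemma pos_add (hm : 4 ≤ m) (q : ℕ) (hq : pos m (q * m) = ![(q : ZMod m), -(q : ZMod m)]) :
    ∀ r, 1 ≤ r → r ≤ m →
      pos m (q * m + r) = ![(q : ZMod m) + 1, (r : ZMod m) - (q : ZMod m) - 1] := by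
  intro r
  induction r with
  | zero => omega
  | succ r ih =>
    intro _ hr
    rcases Nat.eq_zero_or_pos r with rfl | hr1
    · rw [show q * m + 1 = (q * m) + 1 from rfl, pos_succ, hq]
      unfold nxt
      rw [if_pos (by simp)]
      funext i
      fin_cases i <;> simp <;> push_cast <;> ring
    · have h := ih (by omega) (by omega)
      have hrne : (r : ZMod m) ≠ 0 := cast_ne hm hr1 (by omega)
      rw [show q * m + (r + 1) = (q * m + r) + 1 from rfl, pos_succ, h]
      unfold nxt
      rw [if_neg (by
        simp only [Matrix.cons_val_zero, Matrix.cons_val_one, Matrix.head_cons]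
        intro h0
        exact hrne (by linear_combination h0))]
      funext i
      fin_cases i <;> simp <;> push_cast <;> ring

lemma pos_mul (hm : 4 ≤ m) : ∀ q, pos m (q * m) = ![(q : ZMod m), -(q : ZMod m)] := by
  intro q
  induction q with
  | zero => funext i; fin_cases i <;> simp [pos]
  | succ q ih =>
    have h := pos_add hm q ih m (by omega) le_rfl
    rw [Nat.succ_mul, h]
    funext i
    fin_cases i <;> simp [ZMod.natCast_self] <;> push_cast <;> ring

lemma pos_N (hm : 4 ≤ m) : pos m (m * m) = ![0, 0] := by
  rw [pos_mul hm m]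
  funext i
  fin_cases i <;> simp [ZMod.natCast_self]

lemma pos_inj (hm : 4 ≤ m) {s t : ℕ} (hs : s < m * m) (ht : t < m * m)
    (h : pos m s = pos m t) : s = t := by
  haveI : NeZero m := ⟨by omega⟩
  have hsum : (s : ZMod m) = (t : ZMod m) := by
    rw [← pos_sum s, ← pos_sum t, h]
  have hmod : s % m = t % m := by
    rwa [ZMod.natCast_eq_natCast_iff] at hsum
  have hds := Nat.div_add_mod s m
  have hdt := Nat.div_add_mod t m
  have hqs : s / m < m := Nat.div_lt_of_lt_mul (by omega)
  have hqt : t / m < m := Nat.div_lt_of_lt_mul (by omega)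
  have hrs : s % m < m := Nat.mod_lt _ (by omega)
  have hrt : t % m < m := Nat.mod_lt _ (by omega)
  have hs' : s = (s / m) * m + s % m := (Nat.div_add_mod' s m).symm
  have ht' : t = (t / m) * m + t % m := (Nat.div_add_mod' t m).symm
  rcases Nat.eq_zero_or_pos (s % m) with h0 | h1
  · rw [hs', ht', h0, ← hmod, h0] at h
    rw [Nat.add_zero, Nat.add_zero, pos_mul hm, pos_mul hm] at h
    have h1 := congrFun h 0
    simp only [Matrix.cons_val_zero] at h1
    have heq : s / m = t / m := by
      have := congrArg ZMod.val h1
      rwa [ZMod.val_natCast_of_lt hqs, ZMod.val_natCast_of_lt hqt] at this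
    calc s = (s / m) * m + s % m := hs'
    _ = (t / m) * m + t % m := by rw [heq, hmod]
    _ = t := ht'.symm
  · rw [hs', ht', ← hmod] at h
    rw [pos_add hm _ (pos_mul hm _) _ h1 (by omega),
        pos_add hm _ (pos_mul hm _) _ h1 (by omega)] at h
    have h1' := congrFun h 0
    simp only [Matrix.cons_val_zero] at h1'
    have h2 : (↑(s / m) : ZMod m) = ↑(t / m) := by linear_combination h1'
    have heq : s / m = t / m := by
      have := congrArg ZMod.val h2
      rwa [ZMod.val_natCast_of_lt hqs, ZMod.val_natCast_of_lt hqt] at this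
    calc s = (s / m) * m + s % m := hs'
    _ = (t / m) * m + t % m := by rw [heq, hmod]
    _ = t := ht'.symm

lemma pos_surj (hm : 4 ≤ m) (v : Fin 2 → ZMod m) : ∃ t < m * m, pos m t = v := by
  haveI : NeZero m := ⟨by omega⟩
  have hinj : Function.Injective (fun i : Fin (m * m) => pos m i.1) := by
    intro a b hab
    exact Fin.ext (pos_inj hm a.2 b.2 hab)
  have hcard : Fintype.card (Fin (m * m)) = Fintype.card (Fin 2 → ZMod m) := by
    simp [ZMod.card, Fintype.card_fun, sq]
  have hbij := (Fintype.bijective_iff_injective_and_card _).2 ⟨hinj, hcard⟩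
  obtain ⟨i, hi⟩ := hbij.2 v
  exact ⟨i.1, i.2, hi⟩

end G2HamAux
namespace G2HamAux

open SimpleGraph

variable {m : ℕ}

def wk (m : ℕ) (hm : 4 ≤ m) : (t : ℕ) → (torusGraph m 2).Walk ![0, 0] (pos m t)
  | 0 => Walk.nil
  | t + 1 => (wk m hm t).concat (adj_nxt hm (pos m t))

lemma wk_support (hm : 4 ≤ m) (t : ℕ) :
    (wk m hm t).support = (List.range (t + 1)).map (pos m) := by
  induction t with
  | zero => simp [wk]; rfl
  | succ t ih =>
    change ((wk m hm t).concat (adj_nxt hm (pos m t))).support = _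
    rw [Walk.support_concat, ih, List.range_succ (n := t + 1), List.map_append]
    rfl

lemma wk_edges (hm : 4 ≤ m) (t : ℕ) :
    (wk m hm t).edges = (List.range t).map (fun i => s(pos m i, pos m (i + 1))) := by
  induction t with
  | zero => simp [wk]; rfl
  | succ t ih =>
    change ((wk m hm t).concat (adj_nxt hm (pos m t))).edges = _
    rw [Walk.edges_concat, ih, List.range_succ, List.map_append, List.concat_eq_append]
    rfl

/-- The source Hamiltonian cycle. -/
def ham (m : ℕ) (hm : 4 ≤ m) : (torusGraph m 2).Walk ![0, 0] ![0, 0] :=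
  (wk m hm (m * m)).copy rfl (pos_N hm)

lemma mem_ham_edges (hm : 4 ≤ m) {e : Sym2 (Fin 2 → ZMod m)} :
    e ∈ (ham m hm).edges ↔ ∃ v, e = s(v, nxt m v) := by
  rw [ham, Walk.edges_copy, wk_edges]
  simp only [List.mem_map, List.mem_range]
  constructor
  · rintro ⟨i, hi, rfl⟩
    exact ⟨pos m i, rfl⟩
  · rintro ⟨v, rfl⟩
    obtain ⟨t, ht, rfl⟩ := pos_surj hm v
    exact ⟨t, ht, rfl⟩

lemma eta2 (v : Fin 2 → ZMod m) : ![v 0, v 1] = v := by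
  funext i; fin_cases i <;> rfl

lemma permIso_apply (v : Fin 2 → ZMod m) :
    (permIso m 2 (Equiv.swap 0 1)).toHom v = ![v 1, v 0] := by
  funext i
  fin_cases i <;>
    simp [permIso, Equiv.swap_apply_left, Equiv.swap_apply_right]

lemma tau_nxt (v : Fin 2 → ZMod m) :
    ![(nxt m v) 1, (nxt m v) 0] = nxt' m ![v 1, v 0] := by
  unfold nxt nxt'
  by_cases h : v 0 + v 1 = 0
  · rw [if_pos h, if_pos (show (![v 1, v 0] : Fin 2 → ZMod m) 0 + ![v 1, v 0] 1 = 0 by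
      simpa [add_comm] using h)]
    funext i; fin_cases i <;> simp
  · rw [if_neg h, if_neg (show ¬((![v 1, v 0] : Fin 2 → ZMod m) 0 + ![v 1, v 0] 1 = 0) by
      simpa [add_comm] using h)]
    funext i; fin_cases i <;> simp

lemma mem_ham_map_edges (hm : 4 ≤ m) {e : Sym2 (Fin 2 → ZMod m)} :
    e ∈ ((ham m hm).map (permIso m 2 (Equiv.swap 0 1)).toHom).edges ↔
      ∃ a, e = s(a, nxt' m a) := by
  rw [Walk.edges_map]
  simp only [List.mem_map]
  constructor
  · rintro ⟨e', he', rfl⟩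
    rw [mem_ham_edges hm] at he'
    obtain ⟨v, rfl⟩ := he'
    exact ⟨![v 1, v 0], by rw [Sym2.map_pair_eq, permIso_apply, permIso_apply, tau_nxt]⟩
  · rintro ⟨a, rfl⟩
    refine ⟨s(![a 1, a 0], nxt m ![a 1, a 0]), (mem_ham_edges hm).2 ⟨_, rfl⟩, ?_⟩
    rw [Sym2.map_pair_eq, permIso_apply, permIso_apply, tau_nxt]
    congr 1 <;> simp [eta2]

lemma disj (hm : 4 ≤ m) (u a : Fin 2 → ZMod m) : s(u, nxt m u) ≠ s(a, nxt' m a) := by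
  intro h
  rw [Sym2.eq_iff] at h
  unfold nxt nxt' at h
  split_ifs at h with h1 h2 h2 <;>
    rcases h with ⟨hA, hB⟩ | ⟨hA, hB⟩
  · have c0 := congrFun hB 0
    simp only [Matrix.cons_val_zero] at c0
    rw [hA] at c0
    exact one_ne hm (by linear_combination c0)
  · have a0 := congrFun hA 0
    have b0 := congrFun hB 0
    simp only [Matrix.cons_val_zero] at a0 b0
    exact one_ne hm (by linear_combination b0 - a0)
  · rw [hA] at h1; exact h2 h1
  · have a0 := congrFun hA 0
    have b0 := congrFun hB 0
    simp only [Matrix.cons_val_zero] at a0 b0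
    exact two_ne hm (by linear_combination b0 - a0)
  · rw [hA] at h1; exact h1 h2
  · have a1 := congrFun hA 1
    have b1 := congrFun hB 1
    simp only [Matrix.cons_val_one, Matrix.head_cons, Matrix.cons_val_zero] at a1 b1
    exact two_ne hm (by linear_combination b1 - a1)
  · have c0 := congrFun hB 0
    simp only [Matrix.cons_val_zero] at c0
    rw [hA] at c0
    exact one_ne hm (by linear_combination -c0)
  · have a0 := congrFun hA 0
    have b0 := congrFun hB 0
    simp only [Matrix.cons_val_zero] at a0 b0
    exact one_ne hm (by linear_combination b0 - a0)

lemma cover_h (u : Fin 2 → ZMod m) :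
    (∃ v, s(u, ![u 0 + 1, u 1]) = s(v, nxt m v)) ∨
      (∃ v, s(u, ![u 0 + 1, u 1]) = s(v, nxt' m v)) := by
  by_cases h : u 0 + u 1 = 0
  · exact Or.inl ⟨u, by unfold nxt; rw [if_pos h]⟩
  · exact Or.inr ⟨u, by unfold nxt'; rw [if_neg h]⟩

lemma cover_v (u : Fin 2 → ZMod m) :
    (∃ v, s(u, ![u 0, u 1 + 1]) = s(v, nxt m v)) ∨
      (∃ v, s(u, ![u 0, u 1 + 1]) = s(v, nxt' m v)) := by
  by_cases h : u 0 + u 1 = 0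
  · exact Or.inr ⟨u, by unfold nxt'; rw [if_pos h]⟩
  · exact Or.inl ⟨u, by unfold nxt; rw [if_neg h]⟩

lemma cover (u w : Fin 2 → ZMod m) (h : (torusGraph m 2).Adj u w) :
    (∃ v, s(u, w) = s(v, nxt m v)) ∨ (∃ v, s(u, w) = s(v, nxt' m v)) := by
  obtain ⟨i, ⟨hne, hpm⟩, hrest⟩ := h
  fin_cases i <;>
    simp only [Fin.isValue, Fin.zero_eta, Fin.mk_one] at hpm hrest hne
  · have h1 : u 1 = w 1 := hrest 1 (by simp)
    rcases hpm with hd | hd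
    · -- u 0 - w 0 = 1, so u = w + e0
      have hu : u = ![w 0 + 1, w 1] := by
        funext i
        fin_cases i
        · simpa using (by linear_combination hd : u 0 = w 0 + 1)
        · simpa using h1
      rw [hu, Sym2.eq_swap]
      exact cover_h w
    · have hw : w = ![u 0 + 1, u 1] := by
        funext i
        fin_cases i
        · simpa using (by linear_combination hd : w 0 = u 0 + 1)
        · simpa using h1.symm
      rw [hw]
      exact cover_h u
  · have h1 : u 0 = w 0 := hrest 0 (by simp)
    rcases hpm with hd | hd
    · have hu : u = ![w 0, w 1 + 1] := by
        funext i
        fin_cases i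
        · simpa using h1
        · simpa using (by linear_combination hd : u 1 = w 1 + 1)
      rw [hu, Sym2.eq_swap]
      exact cover_v w
    · have hw : w = ![u 0, u 1 + 1] := by
        funext i
        fin_cases i
        · simpa using h1.symm
        · simpa using (by linear_combination hd : w 1 = u 1 + 1)
      rw [hw]
      exact cover_v u

end G2HamAux
namespace G2HamAux

open SimpleGraph

variable {m : ℕ}

lemma wk_length (hm : 4 ≤ m) (t : ℕ) : (wk m hm t).length = t := by
  induction t with
  | zero => rfl
  | succ t ih =>
    change ((wk m hm t).concat (adj_nxt hm (pos m t))).length = _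
    rw [Walk.length_concat, ih]

lemma pos_inj1 (hm : 4 ≤ m) {s t : ℕ} (hs : s < m * m) (ht : t < m * m)
    (h : pos m (s + 1) = pos m (t + 1)) : s = t := by
  rcases eq_or_lt_of_le (Nat.succ_le_of_lt hs) with hsN | hsN <;>
    rcases eq_or_lt_of_le (Nat.succ_le_of_lt ht) with htN | htN
  · omega
  · rw [show s + 1 = m * m from hsN, pos_N hm] at h
    have : (0 : ℕ) = t + 1 := pos_inj hm (by nlinarith) htN h
    omega
  · rw [show t + 1 = m * m from htN, pos_N hm] at h
    have : s + 1 = 0 := pos_inj hm hsN (by nlinarith) h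
    omega
  · exact Nat.succ_injective (pos_inj hm hsN htN h)

lemma ham_tail (hm : 4 ≤ m) :
    (ham m hm).support.tail = (List.range (m * m)).map (fun i => pos m (i + 1)) := by
  rw [ham, Walk.support_copy, wk_support, List.range_succ_eq_map, List.map_cons,
    List.tail_cons, List.map_map]
  rfl

lemma ham_isHamiltonianCycle (hm : 4 ≤ m) : (ham m hm).IsHamiltonianCycle := by
  have hN : 16 ≤ m * m := by nlinarith
  rw [Walk.isHamiltonianCycle_iff_isCycle_and_support_count_tail_eq_one]
  have tail_nodup : ((ham m hm).support.tail).Nodup := by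
    rw [ham_tail hm]
    refine List.Nodup.map_on ?_ List.nodup_range
    intro i hi j hj hij
    rw [List.mem_range] at hi hj
    exact pos_inj1 hm hi hj hij
  constructor
  · rw [Walk.isCycle_def]
    refine ⟨?_, ?_, ?_⟩
    · rw [Walk.isTrail_def, ham, Walk.edges_copy, wk_edges]
      refine List.Nodup.map_on ?_ List.nodup_range
      intro i hi j hj hij
      rw [List.mem_range] at hi hj
      rw [Sym2.eq_iff] at hij
      rcases hij with ⟨hA, hB⟩ | ⟨hA, hB⟩
      · exact pos_inj hm hi hj hA
      · exfalso
        have e1 : (i : ZMod m) = ((j + 1 : ℕ) : ZMod m) := by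
          rw [← pos_sum i, ← pos_sum (j + 1), hA]
        have e2 : ((i + 1 : ℕ) : ZMod m) = (j : ZMod m) := by
          rw [← pos_sum (i + 1), ← pos_sum j, hB]
        push_cast at e1 e2
        exact two_ne hm (by linear_combination e2 - e1)
    · intro hnil
      have := congrArg Walk.length hnil
      rw [ham, Walk.length_copy, wk_length hm, Walk.length_nil] at this
      omega
    · exact tail_nodup
  · intro a
    refine List.count_eq_one_of_mem tail_nodup ?_
    rw [ham_tail hm]
    simp only [List.mem_map, List.mem_range]
    obtain ⟨t, ht, hta⟩ := pos_surj hm a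
    rcases Nat.eq_zero_or_pos t with rfl | ht1
    · refine ⟨m * m - 1, by omega, ?_⟩
      rw [show m * m - 1 + 1 = m * m by omega, pos_N hm, ← hta]
      rfl
    · exact ⟨t - 1, by omega, by rw [show t - 1 + 1 = t by omega, hta]⟩

end G2HamAux

/-- For every `n ≥ 1`, with `m = 4^n`, there is a Hamiltonian cycle `H` of
`G_{n,2} = C_m^{□2}` such that `H` and `τ(H)` are edge-disjoint and together cover
every edge of `C_m^{□2}`, where `τ` is the automorphism swapping the two axes;
i.e. `G_{n,2}` has a Latin Hamilton decomposition `{H, τ(H)}` with source cycle `H`. -/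
theorem G_n2_latin_hamDecomp (n : ℕ) (hn : 1 ≤ n) :
    ∃ (v : Fin 2 → ZMod (4 ^ n)) (H : (torusGraph (4 ^ n) 2).Walk v v),
      H.IsHamiltonianCycle ∧
      (∀ e, e ∈ H.edges →
        e ∉ (H.map (permIso (4 ^ n) 2 (Equiv.swap 0 1)).toHom).edges) ∧
      (∀ e ∈ (torusGraph (4 ^ n) 2).edgeSet,
        e ∈ H.edges ∨ e ∈ (H.map (permIso (4 ^ n) 2 (Equiv.swap 0 1)).toHom).edges) := by
  have hm : 4 ≤ 4 ^ n := by
    calc 4 = 4 ^ 1 := (pow_one 4).symm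
    _ ≤ 4 ^ n := Nat.pow_le_pow_right (by norm_num) hn
  refine ⟨![0, 0], G2HamAux.ham (4 ^ n) hm, G2HamAux.ham_isHamiltonianCycle hm, ?_, ?_⟩
  · intro e he hc
    rw [G2HamAux.mem_ham_edges hm] at he
    rw [G2HamAux.mem_ham_map_edges hm] at hc
    obtain ⟨u, rfl⟩ := he
    obtain ⟨a, ha⟩ := hc
    exact G2HamAux.disj hm u a ha
  · intro e he
    induction e with
    | _ u w =>
      rw [SimpleGraph.mem_edgeSet] at he
      rcases G2HamAux.cover u w he with ⟨v, hv⟩ | ⟨v, hv⟩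
      · exact Or.inl ((G2HamAux.mem_ham_edges hm).2 ⟨v, hv⟩)
      · exact Or.inr ((G2HamAux.mem_ham_map_edges hm).2 ⟨v, hv⟩)
end

section
/- Fix n ≥ 1 and identify Q_{2n} with C_4^{□n} and Q_{4n} with C_4^{□2n}. Suppose E is a source cycle for C_4^{□n} with Latin family (σ_1, …, σ_n) (so σ_1 = id, the matrix (σ_i(j)) is a Latin square, and {σ_1(E), …, σ_n(E)} is a Hamilton decomposition of C_4^{□n}), and suppose H is a source cycle for G_{n,2} with Latin family (id, τ), τ being the coordinate swap (so {H, τ(H)} is a Hamilton decomposition of G_{n,2}). Then the Hamilton decomposition {f(σ_i(E), H), f(σ_i(E), τ(H)) : 1 ≤ i ≤ n} of C_4^{□2n} is Latin with source cycle F = f(E, H): the permutations τ_1, …, τ_{2n} of Fin(2n) defined block-wise by τ_{i+εn}(j+δn) = σ_i(j) + ((ε+δ) mod 2)·n for 1 ≤ i,j ≤ n and ε,δ ∈ {0,1} form a Latin family, and the decomposition equals {τ_k(F) : 1 ≤ k ≤ 2n}. -/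
open SimpleGraph

def bEquiv (n : ℕ) : Fin 2 × Fin n ≃ Fin (2 * n) where
  toFun q := ⟨q.1.val * n + q.2.val, by have := q.1.isLt; have := q.2.isLt; nlinarith⟩
  invFun k := if h : k.val < n then (0, ⟨k.val, h⟩) else (1, ⟨k.val - n, by have := k.isLt; omega⟩)
  left_inv q := by
    obtain ⟨⟨dv, hd⟩, j⟩ := q
    have hj := j.isLt
    interval_cases dv
    · simp [Fin.ext_iff, hj]
    · have h1 : ¬ (1 * n + j.val < n) := by omega
      simp only [h1, dif_neg]
      refine Prod.ext (by simp) (Fin.ext ?_)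
      simp
  right_inv k := by
    have := k.isLt
    by_cases h : k.val < n
    · simp [h, Fin.ext_iff]
    · simp only [h, dif_neg]
      apply Fin.ext
      simp
      omega

lemma fin2_cases (d : Fin 2) : d = 0 ∨ d = 1 := by
  obtain ⟨v, hv⟩ := d
  interval_cases v
  · exact Or.inl rfl
  · exact Or.inr rfl

lemma bEquiv_val (n : ℕ) (δ : Fin 2) (j : Fin n) :
    (bEquiv n (δ, j)).val = δ.val * n + j.val := rfl

def glue (n : ℕ) (u w : Fin n → ZMod 4) : Fin (2 * n) → ZMod 4 :=
  fun k => if h : k.val < n then u ⟨k.val, h⟩ else w ⟨k.val - n, by have := k.isLt; omega⟩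

lemma glue_bEquiv_zero (n : ℕ) (u w : Fin n → ZMod 4) (j : Fin n) :
    glue n u w (bEquiv n (0, j)) = u j := by
  have hj := j.isLt
  have hval : (bEquiv n (0, j)).val = j.val := by rw [bEquiv_val]; simp
  simp only [glue]
  rw [dif_pos (by omega)]
  congr 1
  exact Fin.ext (show (bEquiv n (0, j)).val = j.val by omega)

lemma glue_bEquiv_one (n : ℕ) (u w : Fin n → ZMod 4) (j : Fin n) :
    glue n u w (bEquiv n (1, j)) = w j := by
  have hj := j.isLt
  have hval : (bEquiv n (1, j)).val = n + j.val := by rw [bEquiv_val]; omega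
  simp only [glue]
  rw [dif_neg (by omega)]
  congr 1
  exact Fin.ext (show (bEquiv n (1, j)).val - n = j.val by omega)

def tauPerm (n : ℕ) (ε : Fin 2) (s : Equiv.Perm (Fin n)) : Equiv.Perm (Fin (2 * n)) :=
  (bEquiv n).symm.trans ((Equiv.prodCongr (Equiv.addLeft ε) s).trans (bEquiv n))

lemma tauPerm_apply (n : ℕ) (ε : Fin 2) (s : Equiv.Perm (Fin n)) (δ : Fin 2) (j : Fin n) :
    tauPerm n ε s (bEquiv n (δ, j)) = bEquiv n (ε + δ, s j) := by
  simp [tauPerm]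

lemma tauPerm_symm_apply (n : ℕ) (ε : Fin 2) (s : Equiv.Perm (Fin n)) (δ : Fin 2) (j : Fin n) :
    (tauPerm n ε s).symm (bEquiv n (δ, j)) = bEquiv n (-ε + δ, s.symm j) := by
  simp [tauPerm, Equiv.symm_trans_apply]

/-- Latin Hamilton decompositions transfer from `C₄^{□n}` and `G_{n,2}` to `C₄^{□2n}`:
if `E` is a source cycle for `C₄^{□n}` with Latin family `(σ₁, …, σₙ)` and `H` is a
source cycle for `G_{n,2} = C_N □ C_N` (`N = 4^n`) with Latin family `(id, τ)` (`τ` the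
coordinate swap `sw`), then the Hamilton decomposition
`{f(σᵢ(E), H), f(σᵢ(E), sw(H))}` of `C₄^{□2n}` (pulled back along the identification
`e : C₄^{□2n} ≅ C₄^{□n} □ C₄^{□n}`) is Latin with source cycle `F = f(E, H)`:
the block permutations `τ_{i+εn}(j+δn) = σᵢ(j) + ((ε+δ) mod 2)·n` form a Latin family
and the decomposition consists exactly of the cycles `τ_k(F)`. -/
theorem latin_transfer_two_dim (n : ℕ) (hn : 1 ≤ n)
    (v₀ : Fin n → ZMod 4) (E : (torusGraph 4 n).Walk v₀ v₀) (hE : E.IsHamiltonianCycle)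
    (σ : Fin n → Equiv.Perm (Fin n)) (hσ1 : σ ⟨0, hn⟩ = 1)
    (hLatin : ∀ j, Function.Bijective (fun i => σ i j))
    (hEdecomp : IsHamDecomp (torusGraph 4 n)
      (fun i => ⟨_, E.map (permIso 4 n (σ i)).toHom⟩))
    (p₀ : ZMod (4 ^ n) × ZMod (4 ^ n))
    (H : (cycGraph (4 ^ n) □ cycGraph (4 ^ n)).Walk p₀ p₀) (hH : H.IsHamiltonianCycle)
    (sw : (cycGraph (4 ^ n) □ cycGraph (4 ^ n)) →g (cycGraph (4 ^ n) □ cycGraph (4 ^ n)))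
    (hsw : ∀ p : ZMod (4 ^ n) × ZMod (4 ^ n), sw p = (p.2, p.1))
    (hHdecomp : IsHamDecomp (cycGraph (4 ^ n) □ cycGraph (4 ^ n))
      ![⟨p₀, H⟩, ⟨_, H.map sw⟩])
    (φ : ZMod (4 ^ n) → (Fin n → ZMod 4)) (hφ : Function.Bijective φ)
    (hφE : ∀ a : ZMod (4 ^ n), s(φ a, φ (a + 1)) ∈ E.edges)
    (ψ : Fin n → ((cycGraph (4 ^ n) □ cycGraph (4 ^ n)) →g (torusGraph 4 n □ torusGraph 4 n)))
    (hψ : ∀ i (p : ZMod (4 ^ n) × ZMod (4 ^ n)),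
      ψ i p = (permIso 4 n (σ i) (φ p.1), permIso 4 n (σ i) (φ p.2)))
    (e : torusGraph 4 (2 * n) ≃g (torusGraph 4 n □ torusGraph 4 n))
    (he : ∀ w : Fin (2 * n) → ZMod 4,
      e w = (fun i : Fin n => w ⟨i.val, by have := i.isLt; omega⟩,
             fun i : Fin n => w ⟨n + i.val, by have := i.isLt; omega⟩)) :
    ∃ τ : Fin 2 → Fin n → Equiv.Perm (Fin (2 * n)),
      (∀ (ε : Fin 2) (i : Fin n) (δ : Fin 2) (j : Fin n),
        τ ε i ⟨δ.val * n + j.val, by have := δ.isLt; have := j.isLt; nlinarith⟩ =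
          ⟨(σ i j).val + (ε + δ).val * n,
            by have := (σ i j).isLt; have := (ε + δ).isLt; nlinarith⟩) ∧
      τ 0 ⟨0, hn⟩ = 1 ∧
      (∀ j : Fin (2 * n), Function.Bijective (fun q : Fin 2 × Fin n => τ q.1 q.2 j)) ∧
      IsHamDecomp (torusGraph 4 (2 * n))
        (fun q : Fin n × Fin 2 =>
          ⟨_, ((![(⟨p₀, H⟩ : Σ p, (cycGraph (4 ^ n) □ cycGraph (4 ^ n)).Walk p p),
                  ⟨_, H.map sw⟩] q.2).2.map (ψ q.1)).map e.symm.toHom⟩) ∧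
      (∀ (i : Fin n) (ε : Fin 2) (x : Sym2 (Fin (2 * n) → ZMod 4)),
        x ∈ (((![(⟨p₀, H⟩ : Σ p, (cycGraph (4 ^ n) □ cycGraph (4 ^ n)).Walk p p),
                 ⟨_, H.map sw⟩] ε).2.map (ψ i)).map e.symm.toHom).edges ↔
        x ∈ (((H.map (ψ ⟨0, hn⟩)).map e.symm.toHom).map
              (permIso 4 (2 * n) (τ ε i)).toHom).edges) := by
  
  classical
  haveI : NeZero (4 ^ n) := ⟨by positivity⟩
  have h4n : 4 ≤ 4 ^ n := by
    calc (4:ℕ) = 4 ^ 1 := by norm_num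
    _ ≤ 4 ^ n := Nat.pow_le_pow_right (by norm_num) hn
  have hone : (1 : ZMod (4 ^ n)) ≠ 0 := by
    have : ((1:ℕ) : ZMod (4^n)) ≠ 0 := by
      rw [Ne, ZMod.natCast_eq_zero_iff]
      intro hdvd
      have := Nat.le_of_dvd (by norm_num) hdvd
      omega
    simpa using this
  have htwo : (2 : ZMod (4 ^ n)) ≠ 0 := by
    have : ((2:ℕ) : ZMod (4^n)) ≠ 0 := by
      rw [Ne, ZMod.natCast_eq_zero_iff]
      intro hdvd
      have := Nat.le_of_dvd (by norm_num) hdvd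
      omega
    simpa using this
  have hperm : ∀ (k : ℕ) (s : Equiv.Perm (Fin k)) (v : Fin k → ZMod 4),
      permIso 4 k s v = v ∘ s.symm := fun _ _ _ => rfl
  have hgbij : ∀ i, Function.Bijective (fun a => permIso 4 n (σ i) (φ a)) := by
    intro i
    exact (permIso 4 n (σ i)).toEquiv.bijective.comp hφ
  have hψinj : ∀ i, Function.Injective (ψ i) := by
    intro i a b hab
    rw [hψ, hψ] at hab
    obtain ⟨h1, h2⟩ := Prod.mk.injEq .. ▸ hab
    exact Prod.ext ((hgbij i).1 h1) ((hgbij i).1 h2)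
  have hcardV : Fintype.card (Fin n → ZMod 4) = 4 ^ n := by
    simp [Fintype.card_fun, ZMod.card]
  have hcards : Fintype.card (ZMod (4^n) × ZMod (4^n))
      = Fintype.card ((Fin n → ZMod 4) × (Fin n → ZMod 4)) := by
    simp [Fintype.card_prod, ZMod.card, hcardV]
  have hψbij : ∀ i, Function.Bijective (ψ i) :=
    fun i => (Fintype.bijective_iff_injective_and_card (ψ i)).2 ⟨hψinj i, hcards⟩
  have hesymbij : Function.Bijective ⇑e.symm.toHom := e.symm.toEquiv.bijective
  -- glue description of e.symm
  have hglue : ∀ u w : Fin n → ZMod 4, e.symm (u, w) = glue n u w := by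
    intro u w
    have h1 : e (glue n u w) = (u, w) := by
      rw [he]
      refine Prod.ext ?_ ?_
      · funext i
        show glue n u w ⟨i.val, _⟩ = u i
        simp only [glue]
        rw [dif_pos i.isLt]
      · funext i
        show glue n u w ⟨n + i.val, _⟩ = w i
        simp only [glue]
        rw [dif_neg (by omega)]
        congr 1
        exact Fin.ext (by simp)
    rw [← h1, RelIso.symm_apply_apply]
  -- the key pointwise identities
  have key0 : ∀ (i : Fin n) (p : ZMod (4^n) × ZMod (4^n)),
      e.symm (ψ i p) = permIso 4 (2*n) (tauPerm n 0 (σ i)) (e.symm (ψ ⟨0, hn⟩ p)) := by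
    intro i p
    rw [hψ, hψ, hσ1]
    have h1 : ∀ x : Fin n → ZMod 4, permIso 4 n 1 x = x := fun _ => rfl
    rw [h1, h1, hglue, hglue, hperm]
    funext k
    obtain ⟨⟨δ, j⟩, rfl⟩ : ∃ q, bEquiv n q = k := ⟨(bEquiv n).symm k, (bEquiv n).apply_symm_apply k⟩
    show glue n (permIso 4 n (σ i) (φ p.1)) (permIso 4 n (σ i) (φ p.2)) (bEquiv n (δ, j))
        = glue n (φ p.1) (φ p.2) ((tauPerm n 0 (σ i)).symm (bEquiv n (δ, j)))
    rw [tauPerm_symm_apply, hperm, hperm]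
    rcases fin2_cases δ with rfl | rfl
    · rw [glue_bEquiv_zero, show (-0 + 0 : Fin 2) = 0 by decide, glue_bEquiv_zero]
      rfl
    · rw [glue_bEquiv_one, show (-0 + 1 : Fin 2) = 1 by decide, glue_bEquiv_one]
      rfl
  have key1 : ∀ (i : Fin n) (p : ZMod (4^n) × ZMod (4^n)),
      e.symm (ψ i (sw p)) = permIso 4 (2*n) (tauPerm n 1 (σ i)) (e.symm (ψ ⟨0, hn⟩ p)) := by
    intro i p
    rw [hsw, hψ, hψ, hσ1]
    have h1 : ∀ x : Fin n → ZMod 4, permIso 4 n 1 x = x := fun _ => rfl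
    rw [h1, h1, hglue, hglue, hperm]
    funext k
    obtain ⟨⟨δ, j⟩, rfl⟩ : ∃ q, bEquiv n q = k := ⟨(bEquiv n).symm k, (bEquiv n).apply_symm_apply k⟩
    show glue n (permIso 4 n (σ i) (φ p.2)) (permIso 4 n (σ i) (φ p.1)) (bEquiv n (δ, j))
        = glue n (φ p.1) (φ p.2) ((tauPerm n 1 (σ i)).symm (bEquiv n (δ, j)))
    rw [tauPerm_symm_apply, hperm, hperm]
    rcases fin2_cases δ with rfl | rfl
    · rw [glue_bEquiv_zero, show (-1 + 0 : Fin 2) = 1 by decide, glue_bEquiv_one]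
      rfl
    · rw [glue_bEquiv_one, show (-1 + 1 : Fin 2) = 0 by decide, glue_bEquiv_zero]
      rfl
  -- edges of E
  have hφE' : ∀ a b : ZMod (4^n), (cycGraph (4^n)).Adj a b → s(φ a, φ b) ∈ E.edges := by
    intro a b hab
    rw [cycGraph, fromRel_adj] at hab
    obtain ⟨hne, h | h⟩ := hab
    · have hb : a = b + 1 := by linear_combination h
      rw [hb, Sym2.eq_swap]
      exact hφE b
    · have hb : b = a + 1 := by linear_combination h
      rw [hb]
      exact hφE a
  have hEchar : ∀ x ∈ E.edges, ∃ a : ZMod (4^n), x = s(φ a, φ (a + 1)) := by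
    intro x hx
    have hinj : Function.Injective (fun a : ZMod (4^n) => s(φ a, φ (a+1))) := by
      intro a b hab
      simp only [Sym2.eq_iff] at hab
      rcases hab with ⟨h1, h2⟩ | ⟨h1, h2⟩
      · exact hφ.1 h1
      · have e1 : a = b + 1 := hφ.1 h1
        have e2 : a + 1 = b := hφ.1 h2
        exact absurd (by linear_combination e2 - e1 : (2 : ZMod (4^n)) = 0) htwo
    have hnodup : E.edges.Nodup := hE.isCycle.isCircuit.isTrail.edges_nodup
    have hlen : E.edges.length = 4 ^ n := by
      rw [SimpleGraph.Walk.length_edges, hE.length_eq, hcardV]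
    have hset : (Finset.univ.image (fun a : ZMod (4^n) => s(φ a, φ (a+1)))) = E.edges.toFinset := by
      apply Finset.eq_of_subset_of_card_le
      · intro y hy
        simp only [Finset.mem_image, Finset.mem_univ, true_and] at hy
        obtain ⟨a, rfl⟩ := hy
        simpa using hφE a
      · rw [List.toFinset_card_of_nodup hnodup, hlen,
          Finset.card_image_of_injective _ hinj, Finset.card_univ, ZMod.card]
    have hx2 : x ∈ Finset.univ.image (fun a : ZMod (4^n) => s(φ a, φ (a+1))) := by
      rw [hset]
      simpa using hx
    simp only [Finset.mem_image, Finset.mem_univ, true_and] at hx2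
    obtain ⟨a, ha⟩ := hx2
    exact ⟨a, ha.symm⟩
  have hgE : ∀ (i : Fin n) (a b : ZMod (4^n)), (cycGraph (4^n)).Adj a b →
      s(permIso 4 n (σ i) (φ a), permIso 4 n (σ i) (φ b))
        ∈ (E.map (permIso 4 n (σ i)).toHom).edges := by
    intro i a b hab
    rw [SimpleGraph.Walk.edges_map, List.mem_map]
    exact ⟨s(φ a, φ b), hφE' a b hab, rfl⟩
  have cover1 : ∀ u₁ u₂ : Fin n → ZMod 4, (torusGraph 4 n).Adj u₁ u₂ →
      ∃ (i : Fin n) (a b : ZMod (4^n)), (cycGraph (4^n)).Adj a b ∧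
        permIso 4 n (σ i) (φ a) = u₁ ∧ permIso 4 n (σ i) (φ b) = u₂ := by
    intro u₁ u₂ h
    obtain ⟨i, hi⟩ := hEdecomp.2.2 s(u₁, u₂) ((SimpleGraph.mem_edgeSet _).2 h)
    rw [SimpleGraph.Walk.edges_map, List.mem_map] at hi
    obtain ⟨z, hz, hmap⟩ := hi
    obtain ⟨a, rfl⟩ := hEchar z hz
    have hadj : (cycGraph (4^n)).Adj a (a+1) := by
      rw [cycGraph, fromRel_adj]
      refine ⟨fun hcontra => hone (by linear_combination -hcontra), Or.inr (by ring)⟩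
    rw [Sym2.map_pair_eq] at hmap
    rcases Sym2.eq_iff.1 hmap with ⟨hu1, hu2⟩ | ⟨hu1, hu2⟩
    · exact ⟨i, a, a+1, hadj, hu1, hu2⟩
    · exact ⟨i, a+1, a, hadj.symm, hu2, hu1⟩
  have aligned : ∀ (i i' : Fin n), i ≠ i' → ∀ (p q p' q' : ZMod (4^n) × ZMod (4^n)),
      (cycGraph (4^n) □ cycGraph (4^n)).Adj p q →
      (cycGraph (4^n) □ cycGraph (4^n)).Adj p' q' →
      ψ i p = ψ i' p' → ψ i q = ψ i' q' → False := by
    intro i i' hne p q p' q' hpq hpq' h1 h2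
    rw [hψ, hψ] at h1 h2
    rw [Prod.mk.injEq] at h1 h2
    rw [SimpleGraph.boxProd_adj] at hpq hpq'
    rcases hpq with ⟨hadj, heq⟩ | ⟨hadj, heq⟩ <;>
      rcases hpq' with ⟨hadj', heq'⟩ | ⟨hadj', heq'⟩
    · have m1 := hgE i p.1 q.1 hadj
      have m2 := hgE i' p'.1 q'.1 hadj'
      rw [← h1.1, ← h2.1] at m2
      exact hEdecomp.2.1 i i' hne _ m1 m2
    · have : permIso 4 n (σ i) (φ p.1) = permIso 4 n (σ i) (φ q.1) := by
        rw [h1.1, h2.1, heq']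
      exact hadj.ne ((hgbij i).1 this)
    · have : permIso 4 n (σ i) (φ p.2) = permIso 4 n (σ i) (φ q.2) := by
        rw [h1.2, h2.2, heq']
      exact hadj.ne ((hgbij i).1 this)
    · have m1 := hgE i p.2 q.2 hadj
      have m2 := hgE i' p'.2 q'.2 hadj'
      rw [← h1.2, ← h2.2] at m2
      exact hEdecomp.2.1 i i' hne _ m1 m2
  refine ⟨fun ε i => tauPerm n ε (σ i), ?_, ?_, ?_, ?_, ?_⟩
  · -- block formula
    intro ε i δ j
    have h1 : (⟨δ.val * n + j.val, by have := δ.isLt; have := j.isLt; nlinarith⟩ : Fin (2*n))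
        = bEquiv n (δ, j) := Fin.ext rfl
    rw [h1, tauPerm_apply]
    exact Fin.ext (by rw [bEquiv_val]; ring)
  · -- identity
    refine Equiv.ext fun k => ?_
    obtain ⟨⟨δ, j⟩, rfl⟩ : ∃ q, bEquiv n q = k := ⟨(bEquiv n).symm k, (bEquiv n).apply_symm_apply k⟩
    rw [tauPerm_apply, hσ1]
    simp
  · -- Latin property
    intro k
    obtain ⟨⟨δ, j⟩, rfl⟩ : ∃ q, bEquiv n q = k := ⟨(bEquiv n).symm k, (bEquiv n).apply_symm_apply k⟩
    have hfun : (fun q : Fin 2 × Fin n => tauPerm n q.1 (σ q.2) (bEquiv n (δ, j)))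
        = (bEquiv n) ∘ (fun q : Fin 2 × Fin n => (q.1 + δ, σ q.2 j)) := by
      funext q
      exact tauPerm_apply n q.1 (σ q.2) δ j
    show Function.Bijective (fun q : Fin 2 × Fin n => tauPerm n q.1 (σ q.2) (bEquiv n (δ, j)))
    rw [hfun]
    refine (bEquiv n).bijective.comp ⟨?_, ?_⟩
    · rintro ⟨ε₁, i₁⟩ ⟨ε₂, i₂⟩ hq
      simp only [Prod.mk.injEq] at hq
      exact Prod.ext (by exact add_right_cancel hq.1) ((hLatin j).1 hq.2)
    · rintro ⟨a, b⟩
      obtain ⟨i, hi⟩ := (hLatin j).2 b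
      exact ⟨(a - δ, i), by simp [hi, sub_add_cancel]⟩
  · -- Hamilton decomposition
    refine ⟨?_, ?_, ?_⟩
    · rintro ⟨i, ε⟩
      exact ((hHdecomp.1 ε).map (hψbij i)).map hesymbij
    · rintro ⟨i, ε⟩ ⟨i', ε'⟩ hne x hx hx'
      simp only at hx hx'
      rw [SimpleGraph.Walk.edges_map, List.mem_map] at hx hx'
      obtain ⟨y, hy, hxy⟩ := hx
      obtain ⟨y', hy', hxy'⟩ := hx'
      have hinj : Function.Injective ⇑e.symm.toHom := hesymbij.1
      have hyy' : y = y' := Sym2.map.injective hinj (hxy.trans hxy'.symm)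
      subst hyy'
      rw [SimpleGraph.Walk.edges_map, List.mem_map] at hy hy'
      obtain ⟨z, hz, hyz⟩ := hy
      obtain ⟨z', hz', hyz'⟩ := hy'
      by_cases hii : i = i'
      · subst hii
        have hzz' : z = z' := Sym2.map.injective (hψinj i) (hyz.trans hyz'.symm)
        subst hzz'
        have hεε : ε ≠ ε' := by
          intro hc
          exact hne (by rw [hc])
        exact hHdecomp.2.1 ε ε' hεε z hz hz'
      · have hzadj := SimpleGraph.Walk.edges_subset_edgeSet _ hz
        have hz'adj := SimpleGraph.Walk.edges_subset_edgeSet _ hz'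
        clear hz hz'
        revert hyz hzadj
        induction z using Sym2.ind with
        | _ p q =>
        intro hyz hzadj
        revert hyz' hz'adj
        induction z' using Sym2.ind with
        | _ p' q' =>
        intro hyz' hz'adj
        rw [SimpleGraph.mem_edgeSet] at hzadj hz'adj
        have hmm : s(ψ i p, ψ i q) = s(ψ i' p', ψ i' q') := by
          have h := hyz.trans hyz'.symm
          rwa [Sym2.map_pair_eq, Sym2.map_pair_eq] at h
        rcases Sym2.eq_iff.1 hmm with ⟨ha, hb⟩ | ⟨ha, hb⟩
        · exact aligned i i' hii p q p' q' hzadj hz'adj ha hb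
        · exact aligned i i' hii p q q' p' hzadj hz'adj.symm ha hb
    · -- covering
      intro x hx
      revert hx
      induction x using Sym2.ind with
      | _ v w =>
      intro hx
      rw [SimpleGraph.mem_edgeSet] at hx
      have hbox : (torusGraph 4 n □ torusGraph 4 n).Adj (e v) (e w) := e.map_adj_iff.2 hx
      rw [SimpleGraph.boxProd_adj] at hbox
      rcases hbox with ⟨h1, h2⟩ | ⟨h1, h2⟩
      · obtain ⟨i, a, b, hab, hga, hgb⟩ := cover1 _ _ h1
        obtain ⟨c, hc⟩ := (hgbij i).2 (e v).2
        have hboxz : (cycGraph (4^n) □ cycGraph (4^n)).Adj (a, c) (b, c) :=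
          SimpleGraph.boxProd_adj.2 (Or.inl ⟨hab, rfl⟩)
        obtain ⟨ε, hε⟩ := hHdecomp.2.2 s((a,c),(b,c)) ((SimpleGraph.mem_edgeSet _).2 hboxz)
        refine ⟨(i, ε), ?_⟩
        simp only
        rw [SimpleGraph.Walk.edges_map, List.mem_map]
        refine ⟨Sym2.map (ψ i) s((a,c),(b,c)), ?_, ?_⟩
        · rw [SimpleGraph.Walk.edges_map, List.mem_map]
          exact ⟨_, hε, rfl⟩
        · have hva : ψ i (a, c) = e v := by
            rw [hψ]
            exact Prod.ext hga hc
          have hwb : ψ i (b, c) = e w := by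
            rw [hψ]
            refine Prod.ext hgb ?_
            show permIso 4 n (σ i) (φ c) = (e w).2
            rw [show permIso 4 n (σ i) (φ c) = (e v).2 from hc, h2]
          rw [Sym2.map_pair_eq, hva, hwb, Sym2.map_pair_eq]
          show s(e.symm (e v), e.symm (e w)) = s(v, w)
          rw [RelIso.symm_apply_apply, RelIso.symm_apply_apply]
      · obtain ⟨i, a, b, hab, hga, hgb⟩ := cover1 _ _ h1
        obtain ⟨c, hc⟩ := (hgbij i).2 (e v).1
        have hboxz : (cycGraph (4^n) □ cycGraph (4^n)).Adj (c, a) (c, b) :=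
          SimpleGraph.boxProd_adj.2 (Or.inr ⟨hab, rfl⟩)
        obtain ⟨ε, hε⟩ := hHdecomp.2.2 s((c,a),(c,b)) ((SimpleGraph.mem_edgeSet _).2 hboxz)
        refine ⟨(i, ε), ?_⟩
        simp only
        rw [SimpleGraph.Walk.edges_map, List.mem_map]
        refine ⟨Sym2.map (ψ i) s((c,a),(c,b)), ?_, ?_⟩
        · rw [SimpleGraph.Walk.edges_map, List.mem_map]
          exact ⟨_, hε, rfl⟩
        · have hva : ψ i (c, a) = e v := by
            rw [hψ]
            exact Prod.ext hc hga
          have hwb : ψ i (c, b) = e w := by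
            rw [hψ]
            refine Prod.ext ?_ hgb
            show permIso 4 n (σ i) (φ c) = (e w).1
            rw [show permIso 4 n (σ i) (φ c) = (e v).1 from hc, h2]
          rw [Sym2.map_pair_eq, hva, hwb, Sym2.map_pair_eq]
          show s(e.symm (e v), e.symm (e w)) = s(v, w)
          rw [RelIso.symm_apply_apply, RelIso.symm_apply_apply]
  · -- edge sets agree
    intro i ε x
    have hedges : (((![(⟨p₀, H⟩ : Σ p, (cycGraph (4 ^ n) □ cycGraph (4 ^ n)).Walk p p),
             ⟨_, H.map sw⟩] ε).2.map (ψ i)).map e.symm.toHom).edges =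
        (((H.map (ψ ⟨0, hn⟩)).map e.symm.toHom).map
          (permIso 4 (2 * n) (tauPerm n ε (σ i))).toHom).edges := by
      rcases fin2_cases ε with rfl | rfl
      · simp only [Matrix.cons_val_zero]
        rw [SimpleGraph.Walk.edges_map, SimpleGraph.Walk.edges_map,
          SimpleGraph.Walk.edges_map, SimpleGraph.Walk.edges_map,
          SimpleGraph.Walk.edges_map, List.map_map, List.map_map, List.map_map]
        refine List.map_congr_left fun z _ => ?_
        simp only [Function.comp_apply, ← Sym2.map_map]
        rw [Sym2.map_map, Sym2.map_map, Sym2.map_map]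
        refine congrFun (congrArg Sym2.map ?_) z
        funext p
        exact key0 i p
      · simp only [Matrix.cons_val_one, Matrix.head_cons, Matrix.cons_val_zero]
        rw [SimpleGraph.Walk.edges_map, SimpleGraph.Walk.edges_map,
          SimpleGraph.Walk.edges_map, SimpleGraph.Walk.edges_map,
          SimpleGraph.Walk.edges_map, SimpleGraph.Walk.edges_map,
          List.map_map, List.map_map, List.map_map, List.map_map]
        refine List.map_congr_left fun z _ => ?_
        simp only [Function.comp_apply]
        rw [Sym2.map_map, Sym2.map_map, Sym2.map_map, Sym2.map_map]
        refine congrFun (congrArg Sym2.map ?_) z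
        funext p
        exact key1 i p
    rw [hedges]
end
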